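/- arXiv:1610.04206 — 8 statements merged into one kernel-verified Lean document; each statement's English description precedes it below -/
import Mathlib

section
/- For any partition λ of n with length ℓ(λ) and first part λ₁, if T is a quasi-Yamanouchi tableau of shape λ, then the maximum entry appearing in T satisfies ℓ(λ) ≤ max(T) ≤ n − (λ₁ − 1). -/
open YoungDiagram

/-- Entries of `T` are all `< m`.  Entries are 0-based: the value `v` represents the
positive integer `v + 1`, so this says all (1-based) entries are at most `m`. -/
def EntryLE (μ : YoungDiagram) (T : SemistandardYoungTableau μ) (m : ℕ) : Prop :=
  ∀ i j : ℕ, (i, j) ∈ μ → T i j < m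

/-- `T` is quasi-Yamanouchi: whenever a value `v > 0` appears, the leftmost
occurrence of `v` is weakly left of some occurrence of `v - 1`; equivalently some
occurrence of `v` is weakly left of some occurrence of `v - 1`. -/
def IsQY (μ : YoungDiagram) (T : SemistandardYoungTableau μ) : Prop :=
  ∀ v : ℕ, 0 < v → (∃ i j : ℕ, (i, j) ∈ μ ∧ T i j = v) →
    ∃ i j i' j' : ℕ, (i, j) ∈ μ ∧ (i', j') ∈ μ ∧ T i j = v ∧ T i' j' = v - 1 ∧ j ≤ j'

/-- The maximum (1-based) entry of `T` is exactly `m`: all entries are `< m`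
(0-based) and the value `m - 1` appears. -/
def MaxEq (μ : YoungDiagram) (T : SemistandardYoungTableau μ) (m : ℕ) : Prop :=
  EntryLE μ T m ∧ ∃ i j : ℕ, (i, j) ∈ μ ∧ T i j = m - 1

/-- The number of quasi-Yamanouchi tableaux of shape `μ` with maximum entry exactly `m`. -/
noncomputable def QYTeq (μ : YoungDiagram) (m : ℕ) : ℕ :=
  Nat.card {T : SemistandardYoungTableau μ // IsQY μ T ∧ MaxEq μ T m}

/-- The number of semistandard Young tableaux of shape `μ` with entries at most `m`. -/
noncomputable def SSYTle (μ : YoungDiagram) (m : ℕ) : ℕ :=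
  Nat.card {T : SemistandardYoungTableau μ // EntryLE μ T m}

/-- `T` is a standard Young tableau: each of the values `0, …, μ.card - 1`
(representing `1, …, n`) appears exactly once. -/
def IsSYT (μ : YoungDiagram) (T : SemistandardYoungTableau μ) : Prop :=
  ∀ v : ℕ, v < μ.card → ∃! p : ℕ × ℕ, p ∈ μ ∧ T p.1 p.2 = v

/-- The number of standard Young tableaux of shape `μ`. -/
noncomputable def SYTcount (μ : YoungDiagram) : ℕ :=
  Nat.card {T : SemistandardYoungTableau μ // IsSYT μ T}

/-- The descent set of a standard tableau, in the paper's 1-based labelling: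
`d ∈ Des T` iff `1 ≤ d ≤ n - 1` and the (1-based) entry `d + 1` (0-based value `d`)
appears weakly left of the (1-based) entry `d` (0-based value `d - 1`). -/
def Des (μ : YoungDiagram) (T : SemistandardYoungTableau μ) : Set ℕ :=
  {d | 1 ≤ d ∧ d ≤ μ.card - 1 ∧
    ∃ i j i' j' : ℕ, (i, j) ∈ μ ∧ (i', j') ∈ μ ∧ T i j = d ∧ T i' j' = d - 1 ∧ j ≤ j'}

/-- One destandardization step at value `v`: every occurrence of `v` lies strictly
right of every occurrence of `v - 1` (in particular vacuously if no `v - 1` appears),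
and `T'` is obtained from `T` by decrementing every entry equal to `v` to `v - 1`. -/
def StepAt (μ : YoungDiagram) (T T' : SemistandardYoungTableau μ) (v : ℕ) : Prop :=
  0 < v ∧ (∃ i j : ℕ, (i, j) ∈ μ ∧ T i j = v) ∧
    (∀ i j i' j' : ℕ, (i, j) ∈ μ → (i', j') ∈ μ → T i j = v → T i' j' = v - 1 → j' < j) ∧
    (∀ i j : ℕ, (i, j) ∈ μ → T' i j = if T i j = v then v - 1 else T i j)

/-- One destandardization step (at some value). -/
def Step (μ : YoungDiagram) (T T' : SemistandardYoungTableau μ) : Prop :=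
  ∃ v : ℕ, StepAt μ T T' v

/-- `Q` is the destandardization of `T`: it is reachable from `T` by destandardization
steps and no further step applies to it. -/
def IsDst (μ : YoungDiagram) (T Q : SemistandardYoungTableau μ) : Prop :=
  Relation.ReflTransGen (Step μ) T Q ∧ ∀ Q' : SemistandardYoungTableau μ, ¬ Step μ Q Q'

/-- The hook length of the box in row `i`, column `j` of `μ`. -/
def hookLength (μ : YoungDiagram) (i j : ℕ) : ℕ :=
  (μ.rowLen i - j) + (μ.colLen j - i) - 1

/-- The hook-content product `∏_{u ∈ μ} (k + c(u)) / h(u)` where `c(u)` is the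
content (column minus row) and `h(u)` the hook length. -/
noncomputable def hookContent (μ : YoungDiagram) (k : ℕ) : ℚ :=
  ∏ c ∈ μ.cells, ((k : ℚ) + (c.2 : ℚ) - (c.1 : ℚ)) / (hookLength μ c.1 c.2 : ℚ)

/-- `μ` is the partition `(l1, l2, 2^{h2-2}, 1^{h1-h2})`: first row `l1`, second row
`l2`, rows `2, …, h2 - 1` of length `2`, rows `h2, …, h1 - 1` of length `1`, and no
other rows; so the first column has height `h1` and the second column height `h2`. -/
def HasRows2 (μ : YoungDiagram) (l1 l2 h1 h2 : ℕ) : Prop :=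
  μ.rowLen 0 = l1 ∧ μ.rowLen 1 = l2 ∧
    (∀ i : ℕ, 2 ≤ i → i < h2 → μ.rowLen i = 2) ∧
    (∀ i : ℕ, h2 ≤ i → i < h1 → μ.rowLen i = 1) ∧
    (∀ i : ℕ, h1 ≤ i → μ.rowLen i = 0)

/-- For any partition `λ` of `n`, if `T` is a quasi-Yamanouchi tableau of
shape `λ`, then the maximum entry of `T` satisfies `ℓ(λ) ≤ max(T) ≤ n - (λ₁ - 1)`. -/
theorem qyt_max_entry_range (μ : YoungDiagram) (hμ : 0 < μ.card)
    (T : SemistandardYoungTableau μ) (hT : IsQY μ T) (m : ℕ) (hm : MaxEq μ T m) :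
    μ.colLen 0 ≤ m ∧ m ≤ μ.card - (μ.rowLen 0 - 1) := by
  obtain ⟨hle, i₀, j₀, hcell₀, hval₀⟩ := hm
  -- m > 0
  have hm0 : 0 < m := lt_of_le_of_lt (Nat.zero_le _) (hle _ _ hcell₀)
  -- every value v < m appears
  have down : ∀ v : ℕ, (∃ i j : ℕ, (i, j) ∈ μ ∧ T i j = v) →
      ∀ w : ℕ, w ≤ v → ∃ i j : ℕ, (i, j) ∈ μ ∧ T i j = w := by
    intro v
    induction v with
    | zero =>
      intro h w hw
      rw [Nat.le_zero] at hw
      subst hw; exact h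
    | succ v ih =>
      intro h w hw
      rcases Nat.lt_succ_iff_lt_or_eq.mp (Nat.lt_succ_of_le hw) with h' | h'
      · obtain ⟨a, b, a', b', hab, hab', hv1, hv2, _⟩ := hT (v + 1) (Nat.succ_pos v) h
        have hv2' : T a' b' = v := by simpa using hv2
        exact ih ⟨a', b', hab', hv2'⟩ w (by omega)
      · subst h'; exact h
  have appears : ∀ v : ℕ, v < m → ∃ i j : ℕ, (i, j) ∈ μ ∧ T i j = v := by
    intro v hv
    exact down (m - 1) ⟨i₀, j₀, hcell₀, hval₀⟩ v (by omega)
  -- lower bound: column strictness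
  have col_ge : ∀ i : ℕ, (i, 0) ∈ μ → i ≤ T i 0 := by
    intro i
    induction i with
    | zero => intro _; exact Nat.zero_le _
    | succ i ih =>
      intro hi
      show i + 1 ≤ T (i + 1) 0
      have hi' : (i, 0) ∈ μ := μ.up_left_mem (Nat.le_succ i) le_rfl hi
      have h2 : T i 0 < T (i + 1) 0 := T.col_strict (by omega) hi
      have h3 := ih hi'
      omega
  have hcol : 0 < μ.colLen 0 := by
    obtain ⟨⟨a, b⟩, hab⟩ := Finset.card_pos.mp hμ
    have : (0, 0) ∈ μ := μ.up_left_mem (Nat.zero_le _) (Nat.zero_le _) ((YoungDiagram.mem_cells _).mp hab)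
    exact YoungDiagram.mem_iff_lt_colLen.mp this
  have lower : μ.colLen 0 ≤ m := by
    have hmem : (μ.colLen 0 - 1, 0) ∈ μ := by
      rw [YoungDiagram.mem_iff_lt_colLen]; omega
    have h1 := col_ge _ hmem
    have h2 := hle _ _ hmem
    omega
  refine ⟨lower, ?_⟩
  -- key claim: for j ≥ 1 in row 0, the value T 0 j occurs at a strictly smaller column
  have K : ∀ j : ℕ, 1 ≤ j → (0, j) ∈ μ → ∃ a b : ℕ, (a, b) ∈ μ ∧ T a b = T 0 j ∧ b < j := by
    intro j hj hcell
    set v := T 0 j with hv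
    rcases Nat.eq_zero_or_pos v with h0 | hpos
    · have hcell' : (0, j - 1) ∈ μ := μ.up_left_mem le_rfl (by omega) hcell
      have : T 0 (j - 1) ≤ T 0 j := T.row_weak_of_le (by omega) hcell
      exact ⟨0, j - 1, hcell', by omega, by omega⟩
    · obtain ⟨a, b, a', b', hab, hab', hv1, hv2, hbb'⟩ := hT v hpos ⟨0, j, hcell, rfl⟩
      have hrow0 : (0, b') ∈ μ := μ.up_left_mem (Nat.zero_le _) le_rfl hab'
      have h1 : T 0 b' ≤ T a' b' := T.col_weak (Nat.zero_le _) hab'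
      have hb'j : b' < j := by
        by_contra h
        have : T 0 j ≤ T 0 b' := T.row_weak_of_le (by omega) hrow0
        omega
      exact ⟨a, b, hab, hv1, by omega⟩
  -- canonical minimal-column occurrences
  have exj : ∀ v : ℕ, v < m → ∃ b : ℕ, ∃ a : ℕ, (a, b) ∈ μ ∧ T a b = v := by
    intro v hv
    obtain ⟨a, b, h1, h2⟩ := appears v hv
    exact ⟨b, a, h1, h2⟩
  classical
  let cb : ℕ → ℕ := fun v => if h : v < m then Nat.find (exj v h) else 0
  have cb_spec : ∀ v : ℕ, (h : v < m) → ∃ a : ℕ, (a, cb v) ∈ μ ∧ T a (cb v) = v := by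
    intro v h
    simpa [cb, dif_pos h] using Nat.find_spec (exj v h)
  have cb_min : ∀ v : ℕ, (h : v < m) → ∀ b, b < cb v → ¬ ∃ a, (a, b) ∈ μ ∧ T a b = v := by
    intro v h b hb
    have : b < Nat.find (exj v h) := by simpa [cb, dif_pos h] using hb
    exact Nat.find_min (exj v h) this
  let cell : ℕ → ℕ × ℕ := fun v =>
    if h : v < m then ((cb_spec v h).choose, cb v) else (0, 0)
  have cell_mem : ∀ v : ℕ, v < m → cell v ∈ μ.cells := by
    intro v h
    simp only [cell, dif_pos h]
    exact (YoungDiagram.mem_cells _).mpr (cb_spec v h).choose_spec.1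
  have cell_val : ∀ v : ℕ, v < m → T (cell v).1 (cell v).2 = v := by
    intro v h
    simp only [cell, dif_pos h]
    exact (cb_spec v h).choose_spec.2
  -- the finsets
  let S : Finset (ℕ × ℕ) := (Finset.range m).image cell
  let R : Finset (ℕ × ℕ) := (Finset.Ico 1 (μ.rowLen 0)).image (fun j => (0, j))
  have hScard : S.card = m := by
    rw [Finset.card_image_of_injOn, Finset.card_range]
    intro x hx y hy hxy
    have hx' := Finset.mem_range.mp hx
    have hy' := Finset.mem_range.mp hy
    rw [← cell_val x hx', ← cell_val y hy', hxy]
  have hRcard : R.card = μ.rowLen 0 - 1 := by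
    rw [Finset.card_image_of_injective _ (by intro a b h; simpa using h), Nat.card_Ico]
  have hSsub : S ⊆ μ.cells := by
    intro p hp
    obtain ⟨v, hv, rfl⟩ := Finset.mem_image.mp hp
    exact cell_mem v (Finset.mem_range.mp hv)
  have hRsub : R ⊆ μ.cells := by
    intro p hp
    obtain ⟨j, hj, rfl⟩ := Finset.mem_image.mp hp
    rw [Finset.mem_Ico] at hj
    exact (YoungDiagram.mem_cells _).mpr (YoungDiagram.mem_iff_lt_rowLen.mpr hj.2)
  have hdisj : Disjoint S R := by
    rw [Finset.disjoint_left]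
    intro p hpS hpR
    obtain ⟨v, hv, hvp⟩ := Finset.mem_image.mp hpS
    obtain ⟨j, hj, hjp⟩ := Finset.mem_image.mp hpR
    rw [Finset.mem_Ico] at hj
    have hv' := Finset.mem_range.mp hv
    have hcellj : (0, j) ∈ μ := YoungDiagram.mem_iff_lt_rowLen.mpr hj.2
    have hpeq : cell v = (0, j) := by rw [hvp, ← hjp]
    have hveq : T 0 j = v := by
      have := cell_val v hv'
      rw [hpeq] at this
      exact this
    obtain ⟨a, b, hab, hval, hbj⟩ := K j hj.1 hcellj
    have hcb : cb v = j := by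
      have : (cell v).2 = j := by rw [hpeq]
      simpa [cell, dif_pos hv'] using this
    exact cb_min v hv' b (by omega) ⟨a, hab, by omega⟩
  have : S.card + R.card ≤ μ.card := by
    rw [← Finset.card_union_of_disjoint hdisj]
    exact Finset.card_le_card (Finset.union_subset hSsub hRsub)
  rw [hScard, hRcard] at this
  omega
end

section
/- For any partition λ of n and any integer m with ℓ(λ) ≤ m ≤ n − (λ₁ − 1), there exists a quasi-Yamanouchi tableau of shape λ whose maximum entry is exactly m. -/
open YoungDiagram

/-!
Fill column `j` of `μ` with the consecutive values `s j, s j + 1, …` for a weakly increasing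
shift `s` with `s 0 = 0`. Such a filling is semistandard, and it is quasi-Yamanouchi as soon as
each shift exceeds the previous one by less than the height of the previous column: then every
positive value occurs below the first row, directly under its predecessor. Taking `s` as large as
this allows, but capped by `s j + colLen j ≤ m` so that all entries stay within `m`, the last
column reaches `m` once `m ≤ n - (λ₁ - 1)`, while `ℓ(λ) ≤ m` leaves room for every column under
the cap.
-/

open Finset

namespace YoungDiagram

lemma colLen_pos_of_lt_rowLen_zero (μ : YoungDiagram) {j : ℕ} (hj : j < μ.rowLen 0) :
    0 < μ.colLen j :=
  mem_iff_lt_colLen.1 (mem_iff_lt_rowLen.2 hj)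

lemma card_eq_sum_colLen (μ : YoungDiagram) :
    μ.card = ∑ j ∈ range (μ.rowLen 0), μ.colLen j := by
  rw [show μ.card = μ.cells.card from rfl,
    card_eq_sum_card_fiberwise (t := range (μ.rowLen 0)) (f := Prod.snd)]
  · refine sum_congr rfl fun j _ => ?_
    rw [colLen_eq_card]
    rfl
  · intro c hc
    rw [mem_coe, mem_range, ← mem_iff_lt_rowLen]
    exact μ.up_left_mem (Nat.zero_le _) le_rfl ((mem_cells c).1 hc)

lemma card_eq_sum_colLen_sub_one_add_rowLen_zero (μ : YoungDiagram) :
    μ.card = ∑ j ∈ range (μ.rowLen 0), (μ.colLen j - 1) + μ.rowLen 0 := by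
  calc μ.card = ∑ j ∈ range (μ.rowLen 0), (μ.colLen j - 1 + 1) := by
        rw [card_eq_sum_colLen]
        refine sum_congr rfl fun j hj => ?_
        exact (Nat.sub_add_cancel (μ.colLen_pos_of_lt_rowLen_zero (mem_range.1 hj))).symm
    _ = _ := by rw [sum_add_distrib, sum_const, card_range, smul_eq_mul, mul_one]

lemma rowLen_zero_pos (μ : YoungDiagram) (hμ : 0 < μ.card) : 0 < μ.rowLen 0 := by
  have hcard := μ.card_eq_sum_colLen_sub_one_add_rowLen_zero
  refine Nat.pos_of_ne_zero fun h => ?_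
  rw [h, range_zero, sum_empty] at hcard
  omega

end YoungDiagram

open YoungDiagram

section ShiftTableau

variable {μ : YoungDiagram} {s : ℕ → ℕ}

def shiftTableau (μ : YoungDiagram) (s : ℕ → ℕ) (hs : Monotone s) :
    SemistandardYoungTableau μ where
  entry i j := if (i, j) ∈ μ then i + s j else 0
  row_weak' := by
    intro i j1 j2 hj hmem
    rw [if_pos (μ.up_left_mem le_rfl hj.le hmem), if_pos hmem]
    exact Nat.add_le_add_left (hs hj.le) i
  col_strict' := by
    intro i1 i2 j hi hmem
    rw [if_pos (μ.up_left_mem hi.le le_rfl hmem), if_pos hmem]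
    omega
  zeros' := by
    intro i j h
    rw [if_neg h]

lemma shiftTableau_apply (hs : Monotone s) {i j : ℕ} (h : (i, j) ∈ μ) :
    shiftTableau μ s hs i j = i + s j :=
  if_pos h

lemma exists_lower_cell_add_shift_eq (hs : Monotone s) (h0 : s 0 = 0)
    (hstep : ∀ j, (0, j + 1) ∈ μ → s (j + 1) ≤ s j + (μ.colLen j - 1)) :
    ∀ j, (0, j) ∈ μ → 0 < s j → ∃ i' j', (i', j') ∈ μ ∧ 0 < i' ∧ i' + s j' = s j := by
  intro j
  induction j with
  | zero => intro _ hpos; omega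
  | succ j ih =>
    intro hmem hpos
    have hprev : (0, j) ∈ μ := μ.up_left_mem le_rfl (Nat.le_add_right j 1) hmem
    rcases (hs (Nat.le_add_right j 1)).eq_or_lt with heq | hlt
    · rw [← heq] at hpos ⊢
      exact ih hprev hpos
    · -- the value `s (j + 1)` already occurs in column `j`, in row `s (j + 1) - s j ≥ 1`
      have hjump := hstep j hmem
      refine ⟨s (j + 1) - s j, j, mem_iff_lt_colLen.2 ?_, by omega, by omega⟩
      have := mem_iff_lt_colLen.1 hprev
      omega

lemma isQY_shiftTableau (hs : Monotone s) (h0 : s 0 = 0)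
    (hstep : ∀ j, (0, j + 1) ∈ μ → s (j + 1) ≤ s j + (μ.colLen j - 1)) :
    IsQY μ (shiftTableau μ s hs) := by
  rintro v hv ⟨i, j, hmem, hval⟩
  rw [shiftTableau_apply hs hmem] at hval
  obtain ⟨i', j', hmem', hi', hval'⟩ : ∃ i' j', (i', j') ∈ μ ∧ 0 < i' ∧ i' + s j' = v := by
    rcases Nat.eq_zero_or_pos i with rfl | hi
    · rw [zero_add] at hval
      subst hval
      exact exists_lower_cell_add_shift_eq hs h0 hstep j hmem hv
    · exact ⟨i, j, hmem, hi, hval⟩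
  have hup : (i' - 1, j') ∈ μ := μ.up_left_mem (Nat.sub_le i' 1) le_rfl hmem'
  refine ⟨i', j', i' - 1, j', hmem', hup, ?_, ?_, le_rfl⟩
  · rw [shiftTableau_apply hs hmem', hval']
  · rw [shiftTableau_apply hs hup]
    omega

lemma maxEq_shiftTableau (hs : Monotone s) {m : ℕ}
    (hle : ∀ j, (0, j) ∈ μ → s j + μ.colLen j ≤ m) {j : ℕ} (hj : (0, j) ∈ μ)
    (hjm : s j + μ.colLen j = m) :
    MaxEq μ (shiftTableau μ s hs) m := by
  have hcol := mem_iff_lt_colLen.1 hj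
  refine ⟨fun i j' hmem => ?_, μ.colLen j - 1, j, mem_iff_lt_colLen.2 (by omega), ?_⟩
  · rw [shiftTableau_apply hs hmem]
    have := hle j' (μ.up_left_mem (Nat.zero_le i) le_rfl hmem)
    have := mem_iff_lt_colLen.1 hmem
    omega
  · rw [shiftTableau_apply hs (mem_iff_lt_colLen.2 (by omega))]
    omega

end ShiftTableau

section QYShift

/-- Column `j` starts as high as the quasi-Yamanouchi bound `∑_{j' < j} (colLen j' - 1)` allows,
capped so that it ends at most at `m`. -/
def qyShift (μ : YoungDiagram) (m j : ℕ) : ℕ :=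
  min (∑ j' ∈ range j, (μ.colLen j' - 1)) (m - μ.colLen j)

variable (μ : YoungDiagram) {m : ℕ}

lemma qyShift_zero : qyShift μ m 0 = 0 := by
  simp [qyShift]

lemma qyShift_monotone : Monotone (qyShift μ m) := fun _ _ h =>
  min_le_min (sum_le_sum_of_subset (range_subset_range.2 h))
    (Nat.sub_le_sub_left (μ.colLen_anti _ _ h) m)

lemma qyShift_succ_le (hm : μ.colLen 0 ≤ m) {j : ℕ} (hj : (0, j + 1) ∈ μ) :
    qyShift μ m (j + 1) ≤ qyShift μ m j + (μ.colLen j - 1) := by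
  have hsum := sum_range_succ (fun j' => μ.colLen j' - 1) j
  have hpos := mem_iff_lt_colLen.1 hj
  have := μ.colLen_anti j (j + 1) (Nat.le_add_right j 1)
  have := μ.colLen_anti 0 j j.zero_le
  unfold qyShift
  omega

lemma qyShift_add_colLen_le (hm : μ.colLen 0 ≤ m) (j : ℕ) :
    qyShift μ m j + μ.colLen j ≤ m := by
  have := μ.colLen_anti 0 j j.zero_le
  have : qyShift μ m j ≤ m - μ.colLen j := min_le_right _ _
  omega

lemma qyShift_add_colLen_rowLen_sub_one (hL : 0 < μ.rowLen 0) (hm : μ.colLen 0 ≤ m)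
    (h2 : m ≤ μ.card - (μ.rowLen 0 - 1)) :
    qyShift μ m (μ.rowLen 0 - 1) + μ.colLen (μ.rowLen 0 - 1) = m := by
  have hcard := μ.card_eq_sum_colLen_sub_one_add_rowLen_zero
  obtain ⟨k, hk⟩ := Nat.exists_eq_add_one_of_ne_zero hL.ne'
  rw [hk, sum_range_succ] at hcard
  rw [hk] at h2
  have := μ.colLen_pos_of_lt_rowLen_zero (j := k) (by omega)
  have := μ.colLen_anti 0 k k.zero_le
  rw [hk, Nat.add_sub_cancel, qyShift, min_eq_right (by omega)]
  omega

end QYShift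

/-- For any partition `λ` of `n` and any `m` with
`ℓ(λ) ≤ m ≤ n - (λ₁ - 1)`, there is a quasi-Yamanouchi tableau of shape `λ`
with maximum entry exactly `m`. -/
theorem qyt_exists_of_max_entry (μ : YoungDiagram) (hμ : 0 < μ.card) (m : ℕ)
    (h1 : μ.colLen 0 ≤ m) (h2 : m ≤ μ.card - (μ.rowLen 0 - 1)) :
    ∃ T : SemistandardYoungTableau μ, IsQY μ T ∧ MaxEq μ T m := by
  have hL := μ.rowLen_zero_pos hμ
  refine ⟨shiftTableau μ (qyShift μ m) (qyShift_monotone μ), ?_, ?_⟩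
  · exact isQY_shiftTableau _ (qyShift_zero μ) fun j hj => qyShift_succ_le μ h1 hj
  · exact maxEq_shiftTableau _ (fun j _ => qyShift_add_colLen_le μ h1 j)
      (mem_iff_lt_rowLen.2 (Nat.sub_lt hL one_pos))
      (qyShift_add_colLen_rowLen_sub_one μ hL h1 h2)
end

section
/- For a partition λ of n and m ≥ n − (λ₁ − 1), the set QYT_{≤m}(λ) of quasi-Yamanouchi tableaux of shape λ with entries at most m is in bijection with the set SYT(λ) of standard Young tableaux of shape λ. -/
open YoungDiagram

namespace QYTAux

open Finset

variable {μ : YoungDiagram}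

/-- Lexicographic "key" order on cells: compare values, then columns. -/
def kl (T : SemistandardYoungTableau μ) (c c' : ℕ × ℕ) : Prop :=
  T c.1 c.2 < T c'.1 c'.2 ∨ (T c.1 c.2 = T c'.1 c'.2 ∧ c.2 < c'.2)

instance (T : SemistandardYoungTableau μ) (c c' : ℕ × ℕ) : Decidable (kl T c c') := by
  unfold kl; infer_instance

theorem kl_irrefl (T : SemistandardYoungTableau μ) (c : ℕ × ℕ) : ¬ kl T c c := by
  unfold kl; omega

theorem kl_trans {T : SemistandardYoungTableau μ} {a b c : ℕ × ℕ} (h1 : kl T a b)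
    (h2 : kl T b c) : kl T a c := by
  unfold kl at *; omega

/-- On cells of `μ`, the pair (value, column) determines the cell. -/
theorem cell_eq_of_val_col {T : SemistandardYoungTableau μ} {c c' : ℕ × ℕ} (hc : c ∈ μ)
    (hc' : c' ∈ μ) (hv : T c.1 c.2 = T c'.1 c'.2) (hj : c.2 = c'.2) : c = c' := by
  obtain ⟨i, j⟩ := c
  obtain ⟨i', j'⟩ := c'
  simp only at hv hj
  subst hj
  rcases lt_trichotomy i i' with h | h | h
  · exact absurd (T.col_strict h hc') (by omega)
  · simp [h]
  · exact absurd (T.col_strict h hc) (by omega)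

theorem kl_total {T : SemistandardYoungTableau μ} {c c' : ℕ × ℕ} (hc : c ∈ μ) (hc' : c' ∈ μ) :
    kl T c c' ∨ c = c' ∨ kl T c' c := by
  rcases lt_trichotomy (T c.1 c.2) (T c'.1 c'.2) with h | h | h
  · exact Or.inl (Or.inl h)
  · rcases lt_trichotomy c.2 c'.2 with h2 | h2 | h2
    · exact Or.inl (Or.inr ⟨h, h2⟩)
    · exact Or.inr (Or.inl (cell_eq_of_val_col hc hc' h h2))
    · exact Or.inr (Or.inr (Or.inr ⟨h.symm, h2⟩))
  · exact Or.inr (Or.inr (Or.inl h))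

/-- The rank of a cell: the number of cells strictly smaller in key order. -/
def rank (T : SemistandardYoungTableau μ) (c : ℕ × ℕ) : ℕ :=
  (μ.cells.filter (fun c' => kl T c' c)).card

theorem rank_lt_card {T : SemistandardYoungTableau μ} {c : ℕ × ℕ} (hc : c ∈ μ) :
    rank T c < μ.card :=
  Finset.card_lt_card ((Finset.ssubset_iff_of_subset (Finset.filter_subset _ _)).2
    ⟨c, (mem_cells _).2 hc, by simp [kl_irrefl]⟩)

theorem rank_lt_rank_of_kl {T : SemistandardYoungTableau μ} {c c' : ℕ × ℕ} (hc : c ∈ μ)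
    (h : kl T c c') : rank T c < rank T c' := by
  refine Finset.card_lt_card ((Finset.ssubset_iff_of_subset ?_).2
    ⟨c, Finset.mem_filter.2 ⟨(mem_cells _).2 hc, h⟩, by simp [kl_irrefl]⟩)
  intro x hx
  rw [Finset.mem_filter] at hx ⊢
  exact ⟨hx.1, kl_trans hx.2 h⟩

theorem kl_iff_rank_lt {T : SemistandardYoungTableau μ} {c c' : ℕ × ℕ} (hc : c ∈ μ)
    (hc' : c' ∈ μ) : kl T c c' ↔ rank T c < rank T c' := by
  constructor
  · exact rank_lt_rank_of_kl hc
  · intro h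
    rcases kl_total (T := T) hc hc' with h1 | h1 | h1
    · exact h1
    · subst h1; omega
    · exact absurd (rank_lt_rank_of_kl hc' h1) (by omega)

theorem rank_injOn {T : SemistandardYoungTableau μ} {c c' : ℕ × ℕ} (hc : c ∈ μ) (hc' : c' ∈ μ)
    (h : rank T c = rank T c') : c = c' := by
  rcases kl_total (T := T) hc hc' with h1 | h1 | h1
  · exact absurd (rank_lt_rank_of_kl hc h1) (by omega)
  · exact h1
  · exact absurd (rank_lt_rank_of_kl hc' h1) (by omega)

theorem rank_surj (T : SemistandardYoungTableau μ) {v : ℕ} (hv : v < μ.card) :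
    ∃ c ∈ μ.cells, rank T c = v := by
  have himg : μ.cells.image (rank T) = Finset.range μ.card := by
    apply Finset.eq_of_subset_of_card_le
    · intro x hx
      obtain ⟨c, hc, rfl⟩ := Finset.mem_image.1 hx
      exact Finset.mem_range.2 (rank_lt_card ((mem_cells _).1 hc))
    · rw [Finset.card_range, Finset.card_image_of_injOn]
      intro a ha b hb hab
      exact rank_injOn ((mem_cells _).1 ha) ((mem_cells _).1 hb) hab
  have : v ∈ μ.cells.image (rank T) := himg ▸ Finset.mem_range.2 hv
  obtain ⟨c, hc, h⟩ := Finset.mem_image.1 this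
  exact ⟨c, hc, h⟩

/-- Standardization. -/
def std (T : SemistandardYoungTableau μ) : SemistandardYoungTableau μ where
  entry i j := if (i, j) ∈ μ then rank T (i, j) else 0
  row_weak' := by
    intro i j1 j2 hj hcell
    have h1 : (i, j1) ∈ μ := μ.up_left_mem le_rfl hj.le hcell
    show (if (i, j1) ∈ μ then rank T (i, j1) else 0) ≤ (if (i, j2) ∈ μ then rank T (i, j2) else 0)
    rw [if_pos h1, if_pos hcell]
    refine (rank_lt_rank_of_kl h1 ?_).le
    rcases lt_or_eq_of_le (T.row_weak hj hcell) with h | h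
    · exact Or.inl h
    · exact Or.inr ⟨h, hj⟩
  col_strict' := by
    intro i1 i2 j hi hcell
    have h1 : (i1, j) ∈ μ := μ.up_left_mem hi.le le_rfl hcell
    show (if (i1, j) ∈ μ then rank T (i1, j) else 0) < (if (i2, j) ∈ μ then rank T (i2, j) else 0)
    rw [if_pos h1, if_pos hcell]
    exact rank_lt_rank_of_kl h1 (Or.inl (T.col_strict hi hcell))
  zeros' := by
    intro i j h
    exact if_neg h

theorem std_entry (T : SemistandardYoungTableau μ) (i j : ℕ) :
    std T i j = if (i, j) ∈ μ then rank T (i, j) else 0 := rfl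

theorem std_entry_mem {T : SemistandardYoungTableau μ} {i j : ℕ} (h : (i, j) ∈ μ) :
    std T i j = rank T (i, j) := if_pos h

theorem std_isSYT (T : SemistandardYoungTableau μ) : IsSYT μ (std T) := by
  intro v hv
  obtain ⟨c, hc, hr⟩ := rank_surj T hv
  rw [mem_cells] at hc
  refine ⟨c, ⟨hc, ?_⟩, ?_⟩
  · rw [show std T c.1 c.2 = rank T (c.1, c.2) from if_pos hc]
    simpa using hr
  · rintro p ⟨hp, hpv⟩
    rw [show std T p.1 p.2 = rank T (p.1, p.2) from if_pos hp] at hpv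
    refine rank_injOn (T := T) (c := p) (c' := c) hp hc ?_
    rw [hpv]
    simpa using hr.symm

/-- `d` is a "descent-ish" value of `S`: some occurrence of `d` is weakly left of
some occurrence of `d - 1`. -/
def DD (S : SemistandardYoungTableau μ) (d : ℕ) : Prop :=
  0 < d ∧ ∃ c ∈ μ.cells, ∃ c' ∈ μ.cells,
    S c.1 c.2 = d ∧ S c'.1 c'.2 = d - 1 ∧ c.2 ≤ c'.2

instance (S : SemistandardYoungTableau μ) (d : ℕ) : Decidable (DD S d) := by
  unfold DD; infer_instance

/-- The destandardization value map: `ff S v` counts descents `≤ v`. -/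
def ff (S : SemistandardYoungTableau μ) (v : ℕ) : ℕ :=
  ((Finset.Icc 1 v).filter (DD S)).card

theorem ff_zero (S : SemistandardYoungTableau μ) : ff S 0 = 0 := by
  simp [ff]

theorem ff_succ (S : SemistandardYoungTableau μ) (v : ℕ) :
    ff S (v + 1) = ff S v + if DD S (v + 1) then 1 else 0 := by
  have h : Finset.Icc 1 (v + 1) = insert (v + 1) (Finset.Icc 1 v) := by
    ext x; simp only [Finset.mem_Icc, Finset.mem_insert]; omega
  rw [ff, h, Finset.filter_insert]
  split
  · rw [Finset.card_insert_of_notMem (by simp)]; rfl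
  · simp [ff]

theorem ff_mono (S : SemistandardYoungTableau μ) {v v' : ℕ} (h : v ≤ v') : ff S v ≤ ff S v' :=
  Finset.card_le_card (Finset.filter_subset_filter _ (Finset.Icc_subset_Icc_right h))

theorem step_col {S : SemistandardYoungTableau μ} {v : ℕ} {c c' : ℕ × ℕ}
    (h : ¬ DD S (v + 1)) (hc : c ∈ μ) (hc' : c' ∈ μ) (hv : S c.1 c.2 = v)
    (hv' : S c'.1 c'.2 = v + 1) : c.2 < c'.2 := by
  by_contra hcol
  exact h ⟨Nat.succ_pos v, c', (mem_cells _).2 hc', c, (mem_cells _).2 hc, hv',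
    by simpa using hv, by omega⟩

theorem values_lt {S : SemistandardYoungTableau μ} (hS : IsSYT μ S) {c : ℕ × ℕ} (hc : c ∈ μ) :
    S c.1 c.2 < μ.card := by
  classical
  set g : ℕ → ℕ × ℕ := fun v => if h : v < μ.card then (hS v h).exists.choose else (0, 0) with hg
  have hgspec : ∀ v < μ.card, g v ∈ μ ∧ S (g v).1 (g v).2 = v := by
    intro v hv
    rw [hg]; simp only [dif_pos hv]
    exact (hS v hv).exists.choose_spec
  have himg : (Finset.range μ.card).image g = μ.cells := by
    apply Finset.eq_of_subset_of_card_le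
    · intro x hx
      obtain ⟨v, hv, rfl⟩ := Finset.mem_image.1 hx
      exact (mem_cells _).2 (hgspec v (Finset.mem_range.1 hv)).1
    · rw [Finset.card_image_of_injOn, Finset.card_range]
      intro a ha b hb hab
      have h1 := (hgspec a (Finset.mem_range.1 ha)).2
      have h2 := (hgspec b (Finset.mem_range.1 hb)).2
      rw [hab] at h1; omega
  have : c ∈ (Finset.range μ.card).image g := himg ▸ (mem_cells _).2 hc
  obtain ⟨v, hv, rfl⟩ := Finset.mem_image.1 this
  rw [(hgspec v (Finset.mem_range.1 hv)).2]
  exact Finset.mem_range.1 hv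

theorem syt_injOn {S : SemistandardYoungTableau μ} (hS : IsSYT μ S) {c c' : ℕ × ℕ} (hc : c ∈ μ)
    (hc' : c' ∈ μ) (h : S c.1 c.2 = S c'.1 c'.2) : c = c' := by
  have hv : S c'.1 c'.2 < μ.card := values_lt hS hc'
  exact ((hS _ hv).unique ⟨hc, h⟩ ⟨hc', rfl⟩)

theorem colmono {S : SemistandardYoungTableau μ} (hS : IsSYT μ S) :
    ∀ (k v : ℕ) (c c' : ℕ × ℕ), c ∈ μ → c' ∈ μ → S c.1 c.2 = v → S c'.1 c'.2 = v + k + 1 →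
      ff S v = ff S (v + k + 1) → c.2 < c'.2 := by
  intro k
  induction k with
  | zero =>
    intro v c c' hc hc' hv hv' hff
    have hdd : ¬ DD S (v + 1) := by
      intro hdd
      rw [ff_succ, if_pos hdd] at hff
      omega
    exact step_col hdd hc hc' hv hv'
  | succ k ih =>
    intro v c c' hc hc' hv hv' hff
    have hmid : v + k + 1 < μ.card := by
      have := values_lt hS hc'
      omega
    obtain ⟨d, ⟨hd, hdv⟩, -⟩ := hS (v + k + 1) hmid
    have h1 : ff S v ≤ ff S (v + k + 1) := ff_mono S (by omega)
    have h2 : ff S (v + k + 1) ≤ ff S (v + k + 1 + 1) := ff_mono S (by omega)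
    have h3 : ff S (v + k + 1 + 1) = ff S (v + 1 + k + 1) := by ring_nf
    have heq1 : ff S v = ff S (v + k + 1) := by
      rw [show v + (k+1) + 1 = v + k + 1 + 1 by ring] at hff
      omega
    have hlt1 : c.2 < d.2 := ih v c d hc hd hv hdv heq1
    have hdd : ¬ DD S (v + k + 1 + 1) := by
      intro hdd
      rw [show v + (k+1) + 1 = v + k + 1 + 1 by ring, ff_succ, if_pos hdd] at hff
      omega
    have hlt2 : d.2 < c'.2 :=
      step_col hdd hd hc' hdv (by rw [hv']; ring)
    omega

/-- Destandardization. -/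
def dst (S : SemistandardYoungTableau μ) (hS : IsSYT μ S) : SemistandardYoungTableau μ where
  entry i j := if (i, j) ∈ μ then ff S (S i j) else 0
  row_weak' := by
    intro i j1 j2 hj hcell
    have h1 : (i, j1) ∈ μ := μ.up_left_mem le_rfl hj.le hcell
    show (if (i, j1) ∈ μ then ff S (S i j1) else 0) ≤ (if (i, j2) ∈ μ then ff S (S i j2) else 0)
    rw [if_pos h1, if_pos hcell]
    exact ff_mono S (S.row_weak hj hcell)
  col_strict' := by
    intro i1 i2 j hi hcell
    have h1 : (i1, j) ∈ μ := μ.up_left_mem hi.le le_rfl hcell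
    show (if (i1, j) ∈ μ then ff S (S i1 j) else 0) < (if (i2, j) ∈ μ then ff S (S i2 j) else 0)
    rw [if_pos h1, if_pos hcell]
    have hlt : S i1 j < S i2 j := S.col_strict hi hcell
    rcases lt_or_ge (ff S (S i1 j)) (ff S (S i2 j)) with h | h
    · exact h
    have heq : ff S (S i1 j) = ff S (S i2 j) :=
      le_antisymm (ff_mono S hlt.le) h
    have := colmono hS (S i2 j - S i1 j - 1) (S i1 j) (i1, j) (i2, j) h1 hcell rfl
      (by simp only; omega) (by rw [heq]; congr 1; omega)
    simp at this
  zeros' := by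
    intro i j h
    exact if_neg h

theorem dst_entry_mem {S : SemistandardYoungTableau μ} (hS : IsSYT μ S) {i j : ℕ}
    (h : (i, j) ∈ μ) : dst S hS i j = ff S (S i j) := if_pos h

theorem ff_find {S : SemistandardYoungTableau μ} :
    ∀ (u w : ℕ), 0 < w → ff S u = w →
      ∃ d, 0 < d ∧ DD S d ∧ ff S d = w ∧ ff S (d - 1) = w - 1 := by
  intro u
  induction u with
  | zero => intro w hw h; rw [ff_zero] at h; omega
  | succ u ih =>
    intro w hw h
    by_cases hdd : DD S (u + 1)
    · rw [ff_succ, if_pos hdd] at h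
      exact ⟨u + 1, Nat.succ_pos u, hdd, by rw [ff_succ, if_pos hdd]; omega,
        by simpa using (by omega : ff S u = w - 1)⟩
    · rw [ff_succ, if_neg hdd, Nat.add_zero] at h
      exact ih w hw h

theorem dst_isQY (S : SemistandardYoungTableau μ) (hS : IsSYT μ S) : IsQY μ (dst S hS) := by
  intro w hw ⟨i, j, hmem, hval⟩
  rw [dst_entry_mem hS hmem] at hval
  obtain ⟨d, hd0, hdd, hfd, hfd1⟩ := ff_find (S := S) (S i j) w hw hval
  obtain ⟨-, c, hc, c', hc', hvc, hvc', hcol⟩ := hdd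
  rw [mem_cells] at hc hc'
  refine ⟨c.1, c.2, c'.1, c'.2, hc, hc', ?_, ?_, hcol⟩
  · rw [dst_entry_mem hS (by simpa using hc), hvc]  -- careful with pairs
    exact hfd
  · rw [dst_entry_mem hS (by simpa using hc'), hvc']
    exact hfd1

theorem dst_entryLE (S : SemistandardYoungTableau μ) (hS : IsSYT μ S) {m : ℕ}
    (hm : μ.card - (μ.rowLen 0 - 1) ≤ m) : EntryLE μ (dst S hS) m := by
  intro i j hmem
  rw [dst_entry_mem hS hmem]
  set n := μ.card with hn
  set l := μ.rowLen 0 with hl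
  set A := (Finset.Icc 1 (n - 1)).filter (DD S) with hA
  have hffA : ∀ v, ff S v ≤ A.card := by
    intro v
    refine Finset.card_le_card ?_
    intro d hd
    rw [Finset.mem_filter] at hd ⊢
    obtain ⟨hd1, hd2⟩ := hd
    rw [Finset.mem_Icc] at hd1 ⊢
    refine ⟨⟨hd1.1, ?_⟩, hd2⟩
    obtain ⟨-, c, hc, -, -, hvc, -, -⟩ := hd2
    have := values_lt hS ((mem_cells _).1 hc)
    omega
  set B := (Finset.Ioo 0 l).image (fun j => S 0 j) with hB
  have hrow : ∀ {j' : ℕ}, j' < l → (0, j') ∈ μ := by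
    intro j' hj'
    rw [YoungDiagram.mem_iff_lt_rowLen]
    exact hj'
  have hpos : ∀ {j' : ℕ}, 0 < j' → j' < l → 0 < S 0 j' := by
    intro j' h0 hj'
    have h1 : S 0 0 ≤ S 0 j' := S.row_weak_of_le (Nat.zero_le _) (hrow hj')
    rcases Nat.eq_zero_or_pos (S 0 j') with hz | hp
    · exfalso
      have h2 : S 0 0 = S 0 j' := by omega
      have h3 := syt_injOn hS (c := ((0:ℕ),(0:ℕ))) (c' := ((0:ℕ), j'))
        (hrow (by omega)) (hrow hj') h2
      have h4 : (0:ℕ) = j' := congrArg Prod.snd h3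
      omega
    · exact hp
  have hBsub : B ⊆ Finset.Icc 1 (n - 1) := by
    intro x hx
    obtain ⟨j', hj', rfl⟩ := Finset.mem_image.1 hx
    rw [Finset.mem_Ioo] at hj'
    have h1 := hpos hj'.1 hj'.2
    have h2 : S 0 j' < n := values_lt hS (c := (0, j')) (hrow hj'.2)
    rw [Finset.mem_Icc]
    omega
  have hBnotA : ∀ x ∈ B, ¬ DD S x := by
    intro x hx hdd
    obtain ⟨j', hj', hxv⟩ := Finset.mem_image.1 hx
    have hxv2 : S 0 j' = x := hxv
    rw [Finset.mem_Ioo] at hj'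
    obtain ⟨hx0, c, hc, ⟨i2, j2⟩, hc', hvc, hvc', hcol⟩ := hdd
    rw [mem_cells] at hc hc'
    have hceq : c = (0, j') := syt_injOn hS hc (hrow hj'.2) (by rw [hvc, ← hxv2])
    subst hceq
    have hvc2 : S 0 j' = x := hvc
    have hcol2 : j' ≤ j2 := hcol
    have hvc'2 : S i2 j2 = x - 1 := hvc'
    have hc0 : (0, j2) ∈ μ := μ.up_left_mem (Nat.zero_le _) le_rfl hc'
    have hrw : S 0 j' ≤ S 0 j2 := S.row_weak_of_le hcol2 hc0
    have h1 := hpos hj'.1 hj'.2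
    rcases Nat.eq_zero_or_pos i2 with hi2 | h0
    · rw [hi2] at hvc'2
      omega
    · have hcs : S 0 j2 < S i2 j2 := S.col_strict h0 hc'
      omega
  have hBcard : B.card = l - 1 := by
    have hinj : Set.InjOn (fun j => S 0 j) (Finset.Ioo 0 l : Finset ℕ) := by
      intro a ha b hb hab
      rw [Finset.coe_Ioo, Set.mem_Ioo] at ha hb
      have := syt_injOn hS (c := (0, a)) (c' := (0, b)) (hrow ha.2) (hrow hb.2) hab
      simpa using this
    rw [hB, Finset.card_image_of_injOn hinj, Nat.card_Ioo]
    omega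
  have hdisj : Disjoint A B := by
    rw [Finset.disjoint_right]
    intro x hx hxA
    exact hBnotA x hx (Finset.mem_filter.1 hxA).2
  have hunion : A.card + B.card ≤ n - 1 := by
    rw [← Finset.card_union_of_disjoint hdisj]
    calc (A ∪ B).card ≤ (Finset.Icc 1 (n-1)).card := by
          apply Finset.card_le_card
          exact Finset.union_subset (Finset.filter_subset _ _) hBsub
      _ = n - 1 := by rw [Nat.card_Icc]; omega
  have hl1 : 1 ≤ l := by
    have h00 : (0, 0) ∈ μ := μ.up_left_mem (Nat.zero_le _) (Nat.zero_le _) hmem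
    rw [YoungDiagram.mem_iff_lt_rowLen] at h00
    omega
  have hln : l ≤ n := by
    rw [hl, hn, YoungDiagram.rowLen_eq_card]
    exact Finset.card_le_card (Finset.filter_subset _ _)
  have := hffA (S i j)
  omega

theorem ff_std_rank {T : SemistandardYoungTableau μ} (hT : IsQY μ T) :
    ∀ (r : ℕ) (c : ℕ × ℕ), c ∈ μ → rank T c = r → ff (std T) r = T c.1 c.2 := by
  intro r
  induction r with
  | zero =>
    intro c hc hr
    rw [ff_zero]
    by_contra h
    have h0 : 0 < T c.1 c.2 := by omega
    obtain ⟨i, j, i', j', hm1, hm2, hv1, hv2, hjj⟩ := hT (T c.1 c.2) h0 ⟨c.1, c.2, hc, rfl⟩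
    have hkl : kl T (i', j') c := Or.inl (by simp only; omega)
    have := rank_lt_rank_of_kl hm2 hkl
    omega
  | succ r ih =>
    intro c hc hr
    have hrc : r < μ.card := by have := rank_lt_card (T := T) hc; omega
    obtain ⟨c', hc', hr'⟩ := rank_surj T hrc
    rw [mem_cells] at hc'
    have ihv := ih c' hc' hr'
    have hkl : kl T c' c := (kl_iff_rank_lt hc' hc).2 (by omega)
    have hSc : std T c.1 c.2 = r + 1 := by
      rw [std_entry_mem (show (c.1, c.2) ∈ μ from hc)]; exact hr
    have hSc' : std T c'.1 c'.2 = r := by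
      rw [std_entry_mem (show (c'.1, c'.2) ∈ μ from hc')]; exact hr'
    rcases hkl with hlt | ⟨heq, hcol⟩
    · -- T c' < T c
      rcases (show T c.1 c.2 = T c'.1 c'.2 + 1 ∨ T c'.1 c'.2 + 2 ≤ T c.1 c.2 by omega)
        with hv1 | hv1
      · -- jump by exactly one
        obtain ⟨i, j, i', j', hm1, hm2, hval1, hval2, hjj⟩ :=
          hT (T c.1 c.2) (by omega) ⟨c.1, c.2, hc, rfl⟩
        have hcj : c.2 ≤ j := by
          by_contra hcj
          have hklx : kl T (i, j) c := Or.inr ⟨by simp only; omega, by simp only; omega⟩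
          have h1 : rank T (i, j) < r + 1 := by
            have := rank_lt_rank_of_kl hm1 hklx; omega
          have hne : rank T (i, j) ≠ r := by
            intro he
            have heq2 : ((i, j) : ℕ × ℕ) = c' := rank_injOn (T := T) hm1 hc' (by omega)
            have hxx : T c'.1 c'.2 = T i j := by rw [← heq2]
            omega
          have h2 : rank T (i, j) < rank T c' := by omega
          rcases (kl_iff_rank_lt hm1 hc').2 h2 with h3 | ⟨h3, -⟩ <;>
            (simp only at h3; omega)
        have hjc : j' ≤ c'.2 := by
          by_contra hjc
          have hklx : kl T c' (i', j') := Or.inr ⟨by simp only; omega, by simp only; omega⟩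
          have h1 : r < rank T (i', j') := by
            have := rank_lt_rank_of_kl hc' hklx; omega
          have hne : rank T (i', j') ≠ r + 1 := by
            intro he
            have heq2 : ((i', j') : ℕ × ℕ) = c := rank_injOn (T := T) hm2 hc (by omega)
            have hxx : T c.1 c.2 = T i' j' := by rw [← heq2]
            omega
          have h2 : rank T c < rank T (i', j') := by omega
          rcases (kl_iff_rank_lt hc hm2).2 h2 with h3 | ⟨h3, -⟩ <;>
            (simp only at h3; omega)
        have hdd : DD (std T) (r + 1) := by
          refine ⟨Nat.succ_pos r, c, (mem_cells _).2 hc, c', (mem_cells _).2 hc', hSc, ?_, by omega⟩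
          rw [hSc']
          omega
        rw [ff_succ, if_pos hdd, ihv]
        omega
      · -- gap of at least two: impossible by quasi-Yamanouchi
        obtain ⟨i, j, i', j', hm1, hm2, hval1, hval2, hjj⟩ :=
          hT (T c.1 c.2) (by omega) ⟨c.1, c.2, hc, rfl⟩
        have hk1 : kl T c' (i', j') := Or.inl (by simp only; omega)
        have hk2 : kl T (i', j') c := Or.inl (by simp only; omega)
        have := rank_lt_rank_of_kl hc' hk1
        have := rank_lt_rank_of_kl hm2 hk2
        omega
    · -- equal values
      have hdd : ¬ DD (std T) (r + 1) := by
        rintro ⟨-, e, he, e', he', hve, hve', hcol'⟩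
        rw [mem_cells] at he he'
        have h1 : rank T e = r + 1 := by
          rw [← std_entry_mem (show (e.1, e.2) ∈ μ from he)]; exact hve
        have h2 : rank T e' = r := by
          have := hve'
          rw [std_entry_mem (show (e'.1, e'.2) ∈ μ from he')] at this
          simpa using this
        have he1 : e = c := rank_injOn (T := T) he hc (by omega)
        have he2 : e' = c' := rank_injOn (T := T) he' hc' (by omega)
        rw [he1, he2] at hcol'
        omega
      rw [ff_succ, if_neg hdd, ihv]
      omega

theorem roundA (T : SemistandardYoungTableau μ) (hT : IsQY μ T) :
    dst (std T) (std_isSYT T) = T := by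
  ext i j
  by_cases hmem : (i, j) ∈ μ
  · rw [dst_entry_mem _ hmem, std_entry_mem hmem]
    exact ff_std_rank hT (rank T (i, j)) (i, j) hmem rfl
  · rw [(dst (std T) (std_isSYT T)).zeros hmem, T.zeros hmem]

theorem roundB (S : SemistandardYoungTableau μ) (hS : IsSYT μ S) :
    std (dst S hS) = S := by
  ext i j
  by_cases hmem : (i, j) ∈ μ
  · rw [std_entry_mem hmem]
    have hkey : ∀ c' ∈ μ.cells, kl (dst S hS) c' (i, j) ↔ S c'.1 c'.2 < S i j := by
      intro c' hcm
      have hc' : c' ∈ μ := (mem_cells _).1 hcm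
      have hq1 : dst S hS c'.1 c'.2 = ff S (S c'.1 c'.2) :=
        dst_entry_mem hS (show (c'.1, c'.2) ∈ μ from hc')
      have hq2 : dst S hS i j = ff S (S i j) := dst_entry_mem hS hmem
      constructor
      · rintro (h | ⟨h, hcol⟩)
        · have h' : ff S (S c'.1 c'.2) < ff S (S i j) := by
            rw [← hq1, ← hq2]; exact h
          by_contra hle
          exact absurd h' (not_lt.2 (ff_mono S (by omega)))
        · have h' : ff S (S c'.1 c'.2) = ff S (S i j) := by
            rw [← hq1, ← hq2]; exact h
          have hcol' : c'.2 < j := hcol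
          rcases lt_trichotomy (S c'.1 c'.2) (S i j) with h1 | h1 | h1
          · exact h1
          · exfalso
            have hcc : c' = (i, j) := syt_injOn hS hc' hmem (by simpa using h1)
            rw [hcc] at hcol'
            exact absurd (show j < j from hcol') (lt_irrefl j)
          · exfalso
            have hcm2 := colmono hS (S c'.1 c'.2 - S i j - 1) (S i j) (i, j) c' hmem hc'
              rfl (by omega)
              (by rw [show S i j + (S c'.1 c'.2 - S i j - 1) + 1 = S c'.1 c'.2 by omega]
                  exact h'.symm)
            simp only at hcm2
            omega
      · intro h
        rcases lt_or_ge (ff S (S c'.1 c'.2)) (ff S (S i j)) with h1 | h1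
        · exact Or.inl (show dst S hS c'.1 c'.2 < dst S hS i j by rw [hq1, hq2]; exact h1)
        · have heq : ff S (S c'.1 c'.2) = ff S (S i j) := le_antisymm (ff_mono S h.le) h1
          have hcol := colmono hS (S i j - S c'.1 c'.2 - 1) (S c'.1 c'.2) c' (i, j) hc' hmem
            rfl (by simp only; omega)
            (by rw [show S c'.1 c'.2 + (S i j - S c'.1 c'.2 - 1) + 1 = S i j by omega]
                exact heq)
          exact Or.inr ⟨show dst S hS c'.1 c'.2 = dst S hS i j by rw [hq1, hq2, heq],
            by simpa using hcol⟩
    have hfilter : μ.cells.filter (fun c' => kl (dst S hS) c' (i, j)) =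
        μ.cells.filter (fun c' => S c'.1 c'.2 < S i j) := by
      apply Finset.filter_congr
      intro c' hcm
      exact hkey c' hcm
    show rank (dst S hS) (i, j) = S i j
    unfold rank
    rw [hfilter]
    have hcount : (μ.cells.filter (fun c' => S c'.1 c'.2 < S i j)).card =
        (Finset.range (S i j)).card := by
      apply Finset.card_bij (fun c' _ => S c'.1 c'.2)
      · intro a ha
        rw [Finset.mem_range]
        exact (Finset.mem_filter.1 ha).2
      · intro a ha b hb hab
        exact syt_injOn hS ((mem_cells _).1 (Finset.mem_filter.1 ha).1)
          ((mem_cells _).1 (Finset.mem_filter.1 hb).1) hab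
      · intro b hb
        rw [Finset.mem_range] at hb
        have hbn : b < μ.card := by
          have h2 : S i j < μ.card := values_lt hS hmem
          omega
        obtain ⟨p, ⟨hp, hpv⟩, -⟩ := hS b hbn
        exact ⟨p, Finset.mem_filter.2 ⟨(mem_cells _).2 hp, by omega⟩, hpv⟩
    rw [hcount, Finset.card_range]
  · rw [(std (dst S hS)).zeros hmem, S.zeros hmem]

end QYTAux


/-- For `m ≥ n - (λ₁ - 1)`, the set `QYT_{≤m}(λ)` is in bijection with
the set `SYT(λ)`. -/
theorem qyt_equiv_syt (μ : YoungDiagram) (m : ℕ) (hm : μ.card - (μ.rowLen 0 - 1) ≤ m) :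
    Nonempty ({T : SemistandardYoungTableau μ // IsQY μ T ∧ EntryLE μ T m} ≃
      {T : SemistandardYoungTableau μ // IsSYT μ T}) := by
  exact ⟨{
    toFun := fun T => ⟨QYTAux.std T.1, QYTAux.std_isSYT T.1⟩
    invFun := fun S => ⟨QYTAux.dst S.1 S.2, QYTAux.dst_isQY S.1 S.2,
      QYTAux.dst_entryLE S.1 S.2 hm⟩
    left_inv := fun T => Subtype.ext (QYTAux.roundA T.1 T.2.1)
    right_inv := fun S => Subtype.ext (QYTAux.roundB S.1 S.2) }⟩
end

section
/- The destandardization map dst: SSYT_n(λ) → QYT_{≤n}(λ) is injective if and only if n ≤ ℓ(λ). -/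
open YoungDiagram

/-!
If `n ≤ ℓ(λ)`, the first column of any `T ∈ SSYT_n(λ)` is forced to read `0, 1, …, ℓ(λ) - 1`
(0-based), so every value `v > 0` of `T` has a `v - 1` directly above it in that column, no
destandardization step applies, and `dst` is the identity. If `n > ℓ(λ)`, the highest-weight
tableau and the same tableau with its last row raised by one both lie in `SSYT_n(λ)` and both
destandardize to the highest-weight tableau.
-/

namespace SemistandardYoungTableau

variable {μ : YoungDiagram}

theorem add_le_of_mem (T : SemistandardYoungTableau μ) {i j : ℕ} :
    ∀ k : ℕ, (i + k, j) ∈ μ → T i j + k ≤ T (i + k) j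
  | 0, _ => le_rfl
  | k + 1, hmem => by
    have hk : (i + k, j) ∈ μ := μ.up_left_mem (by omega) le_rfl hmem
    have := T.col_strict (show i + k < i + (k + 1) by omega) hmem
    have := add_le_of_mem T k hk
    omega

def ofStrictMono (μ : YoungDiagram) (f : ℕ → ℕ) (hf : StrictMono f) :
    SemistandardYoungTableau μ where
  entry i j := if (i, j) ∈ μ then f i else 0
  row_weak' hj hcell := by
    rw [if_pos hcell, if_pos (μ.up_left_mem le_rfl hj.le hcell)]
  col_strict' hi hcell := by
    rw [if_pos hcell, if_pos (μ.up_left_mem hi.le le_rfl hcell)]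
    exact hf hi
  zeros' not_cell := if_neg not_cell

theorem ofStrictMono_apply {f : ℕ → ℕ} {hf : StrictMono f} {i j : ℕ} (h : (i, j) ∈ μ) :
    ofStrictMono μ f hf i j = f i :=
  if_pos h

end SemistandardYoungTableau

open SemistandardYoungTableau

theorem YoungDiagram.lt_colLen_zero_of_mem {μ : YoungDiagram} {i j : ℕ} (h : (i, j) ∈ μ) :
    i < μ.colLen 0 :=
  (mem_iff_lt_colLen.1 h).trans_le (μ.colLen_anti 0 j (Nat.zero_le j))

theorem YoungDiagram.colLen_zero_pos {μ : YoungDiagram} (hμ : 0 < μ.card) : 0 < μ.colLen 0 := by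
  obtain ⟨⟨i, j⟩, hij⟩ := Finset.card_pos.1 hμ
  exact lt_colLen_zero_of_mem (μ.up_left_mem (Nat.zero_le i) (Nat.zero_le j) hij)

theorem EntryLE.mono {μ : YoungDiagram} {T : SemistandardYoungTableau μ} {m m' : ℕ}
    (hT : EntryLE μ T m) (h : m ≤ m') : EntryLE μ T m' :=
  fun i j hij => (hT i j hij).trans_le h

theorem IsDst.eq_of_forall_not_step {μ : YoungDiagram} {T Q : SemistandardYoungTableau μ}
    (h : IsDst μ T Q) (hT : ∀ T', ¬ Step μ T T') : Q = T := by
  rcases h.1.cases_head with h | ⟨T', hstep, -⟩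
  · exact h.symm
  · exact absurd hstep (hT T')

section EntriesBelowColLen

variable {μ : YoungDiagram} {T : SemistandardYoungTableau μ}

/-- The first column strictly increases through `ℓ(λ)` values all below `ℓ(λ)`. -/
theorem EntryLE.apply_zero_eq (hT : EntryLE μ T (μ.colLen 0)) {i : ℕ} (hi : i < μ.colLen 0) :
    T i 0 = i := by
  have hlast : (i + (μ.colLen 0 - 1 - i), 0) ∈ μ := mem_iff_lt_colLen.2 (by omega)
  have hbelow := T.add_le_of_mem (i := 0) i (by simpa using mem_iff_lt_colLen.2 hi)
  rw [Nat.zero_add] at hbelow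
  have habove := T.add_le_of_mem _ hlast
  have htop := hT _ _ hlast
  omega

/-- Each value `v > 0` sits in the first column directly below a `v - 1`, so no step applies. -/
theorem EntryLE.not_step (hT : EntryLE μ T (μ.colLen 0)) (T' : SemistandardYoungTableau μ) :
    ¬ Step μ T T' := by
  rintro ⟨v, hv, ⟨i, j, hij, rfl⟩, hsep, -⟩
  have hlt : T i j < μ.colLen 0 := hT i j hij
  have := hsep (T i j) 0 (T i j - 1) 0 (mem_iff_lt_colLen.2 hlt)
    (mem_iff_lt_colLen.2 (by omega)) (hT.apply_zero_eq hlt) (hT.apply_zero_eq (by omega))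
  omega

theorem IsDst.eq_of_entryLE_colLen {Q : SemistandardYoungTableau μ}
    (h : IsDst μ T Q) (hT : EntryLE μ T (μ.colLen 0)) : Q = T :=
  h.eq_of_forall_not_step hT.not_step

end EntriesBelowColLen

theorem Nat.strictMono_ite_le_add_one (c : ℕ) : StrictMono fun i => if c ≤ i then i + 1 else i := by
  intro a b hab
  dsimp only
  split_ifs <;> omega

section LastRowRaised

variable (μ : YoungDiagram)

def raisedHighestWeight : SemistandardYoungTableau μ :=
  ofStrictMono μ _ (Nat.strictMono_ite_le_add_one (μ.colLen 0 - 1))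

theorem entryLE_highestWeight : EntryLE μ (highestWeight μ) (μ.colLen 0) := by
  intro i j hij
  simpa [hij] using lt_colLen_zero_of_mem hij

theorem entryLE_raisedHighestWeight : EntryLE μ (raisedHighestWeight μ) (μ.colLen 0 + 1) := by
  intro i j hij
  have := lt_colLen_zero_of_mem hij
  rw [raisedHighestWeight, ofStrictMono_apply hij]
  split_ifs <;> omega

/-- No `ℓ(λ) - 1` is left once the last row is raised, so that row may be lowered back. -/
theorem stepAt_raisedHighestWeight (hμ : 0 < μ.colLen 0) :
    StepAt μ (raisedHighestWeight μ) (highestWeight μ) (μ.colLen 0) := by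
  have hlast : (μ.colLen 0 - 1, 0) ∈ μ := mem_iff_lt_colLen.2 (by omega)
  have hraised : ∀ {i j}, (i, j) ∈ μ →
      raisedHighestWeight μ i j = if μ.colLen 0 - 1 ≤ i then i + 1 else i :=
    fun h => ofStrictMono_apply h
  refine ⟨hμ, ⟨_, 0, hlast, ?_⟩, ?_, ?_⟩
  · rw [hraised hlast, if_pos le_rfl]
    omega
  · intro i j i' j' _ hij' _ hv
    have := lt_colLen_zero_of_mem hij'
    rw [hraised hij'] at hv
    split_ifs at hv <;> omega
  · intro i j hij
    have := lt_colLen_zero_of_mem hij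
    rw [hraised hij, highestWeight_apply, if_pos hij]
    split_ifs <;> omega

theorem isDst_highestWeight : IsDst μ (highestWeight μ) (highestWeight μ) :=
  ⟨.refl, (entryLE_highestWeight μ).not_step⟩

theorem isDst_raisedHighestWeight (hμ : 0 < μ.colLen 0) :
    IsDst μ (raisedHighestWeight μ) (highestWeight μ) :=
  ⟨.single ⟨_, stepAt_raisedHighestWeight μ hμ⟩, (entryLE_highestWeight μ).not_step⟩

theorem raisedHighestWeight_ne_highestWeight (hμ : 0 < μ.colLen 0) :
    raisedHighestWeight μ ≠ highestWeight μ := by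
  intro h
  have hlast : (μ.colLen 0 - 1, 0) ∈ μ := mem_iff_lt_colLen.2 (by omega)
  have := congrArg (fun T : SemistandardYoungTableau μ => T (μ.colLen 0 - 1) 0) h
  simp only [raisedHighestWeight, ofStrictMono_apply hlast, highestWeight_apply, if_pos hlast,
    if_pos le_rfl] at this
  omega

end LastRowRaised

/-- The destandardization map `dst : SSYT_n(λ) → QYT_{≤n}(λ)` is
injective if and only if `n ≤ ℓ(λ)`. -/
theorem dst_injective_iff (μ : YoungDiagram) (hμ : 0 < μ.card) (n : ℕ) :
    (∀ T1 T2 Q : SemistandardYoungTableau μ, EntryLE μ T1 n → EntryLE μ T2 n →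
      IsDst μ T1 Q → IsDst μ T2 Q → T1 = T2) ↔ n ≤ μ.colLen 0 := by
  have hc := colLen_zero_pos hμ
  constructor
  · intro hinj
    by_contra! hn
    exact raisedHighestWeight_ne_highestWeight μ hc <|
      hinj _ _ _ ((entryLE_raisedHighestWeight μ).mono hn) ((entryLE_highestWeight μ).mono hn.le)
        (isDst_raisedHighestWeight μ hc) (isDst_highestWeight μ)
  · intro hn T1 T2 Q hT1 hT2 hQ1 hQ2
    rw [← hQ1.eq_of_entryLE_colLen (hT1.mono hn), ← hQ2.eq_of_entryLE_colLen (hT2.mono hn)]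
end

section
/- For a partition λ of size n and its conjugate λ', and any m, the number of quasi-Yamanouchi tableaux of shape λ with maximum entry exactly m equals the number of quasi-Yamanouchi tableaux of shape λ' with maximum entry exactly (n+1)−m. -/
open YoungDiagram

/-!
Standardization numbers the cells of a tableau by increasing entry, breaking ties left to right;
destandardization replaces each entry `i` of a standard tableau by one plus the number of
descents `d < i`. On quasi-Yamanouchi tableaux they are mutually inverse: two cells that are
consecutive in the standardization carry equal entries, or entries differing by one exactly
when the later cell lies weakly left of the earlier one, i.e. at a descent. Hence
`QYT_{=m}(λ)` counts standard tableaux of shape `λ` with `m - 1` descents.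

Transposing a standard tableau complements its descent set in `{1, …, n - 1}`, because `d + 1`
lies weakly left of `d` exactly when it lies strictly below it. So `m - 1` descents on `λ`
become `n - m` descents on `λ'`. Outside `1 ≤ m ≤ n` both sides vanish, since a
quasi-Yamanouchi tableau with maximum `m` uses every value `1, …, m`.
-/

open Finset

section RankIn

variable {α β : Type*} [LinearOrder β] {s : Finset α} {f : α → β} {a x y : α}

def rankIn (s : Finset α) (f : α → β) (a : α) : ℕ :=
  #{x ∈ s | f x < f a}

lemma rankIn_le_rankIn (h : f x ≤ f y) : rankIn s f x ≤ rankIn s f y :=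
  card_le_card <| monotone_filter_right _ fun _ _ hz => hz.trans_le h

lemma rankIn_lt_rankIn (hx : x ∈ s) (h : f x < f y) : rankIn s f x < rankIn s f y :=
  card_lt_card <| (ssubset_iff_of_subset (monotone_filter_right _ fun _ _ hz => hz.trans h)).2
    ⟨x, mem_filter.2 ⟨hx, h⟩, fun hx' => (mem_filter.1 hx').2.false⟩

lemma lt_of_rankIn_lt (h : rankIn s f x < rankIn s f y) : f x < f y :=
  lt_of_not_ge fun h' => (rankIn_le_rankIn h').not_gt h

lemma rankIn_lt_card (ha : a ∈ s) : rankIn s f a < #s :=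
  card_lt_card <| (ssubset_iff_of_subset (filter_subset _ _)).2
    ⟨a, ha, fun ha' => (mem_filter.1 ha').2.false⟩

lemma rankIn_congr {γ : Type*} [LinearOrder γ] {g : α → γ}
    (h : ∀ x ∈ s, ∀ y ∈ s, f x < f y ↔ g x < g y) (ha : a ∈ s) :
    rankIn s f a = rankIn s g a :=
  congrArg card <| filter_congr fun x hx => h x hx a ha

lemma rankIn_injOn (hf : Set.InjOn f s) : Set.InjOn (rankIn s f) s := by
  intro x hx y hy hxy
  rcases lt_trichotomy (f x) (f y) with h | h | h
  · exact absurd hxy (rankIn_lt_rankIn hx h).ne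
  · exact hf hx hy h
  · exact absurd hxy (rankIn_lt_rankIn hy h).ne'

lemma image_rankIn [DecidableEq α] (hf : Set.InjOn f s) : s.image (rankIn s f) = range #s :=
  eq_of_subset_of_card_le (fun _ hv => by
      obtain ⟨a, ha, rfl⟩ := mem_image.1 hv
      exact mem_range.2 (rankIn_lt_card ha))
    (by rw [card_range, card_image_of_injOn (rankIn_injOn hf)])

end RankIn

lemma YoungDiagram.card_transpose (μ : YoungDiagram) : μ.transpose.card = μ.card :=
  card_map _

namespace SemistandardYoungTableau

variable {μ δ : YoungDiagram} {S T : SemistandardYoungTableau μ}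

noncomputable def cellOf (S : SemistandardYoungTableau μ) (v : ℕ) : ℕ × ℕ :=
  Function.invFunOn (fun c : ℕ × ℕ => S c.1 c.2) μ.cells v

lemma exists_cell_of_isSYT (hS : IsSYT μ S) {v : ℕ} (hv : v < μ.card) :
    ∃ c ∈ (μ.cells : Set (ℕ × ℕ)), S c.1 c.2 = v :=
  let ⟨c, hc, _⟩ := hS v hv
  ⟨c, mem_coe.2 ((mem_cells _).2 hc.1), hc.2⟩

lemma cellOf_mem (hS : IsSYT μ S) {v : ℕ} (hv : v < μ.card) : S.cellOf v ∈ μ :=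
  (mem_cells _).1 (Function.invFunOn_mem (exists_cell_of_isSYT hS hv))

lemma entry_cellOf (hS : IsSYT μ S) {v : ℕ} (hv : v < μ.card) :
    S (S.cellOf v).1 (S.cellOf v).2 = v :=
  Function.invFunOn_eq (exists_cell_of_isSYT hS hv)

lemma eq_cellOf (hS : IsSYT μ S) {v : ℕ} (hv : v < μ.card) {c : ℕ × ℕ} (hc : c ∈ μ)
    (h : S c.1 c.2 = v) : c = S.cellOf v :=
  (hS v hv).unique ⟨hc, h⟩ ⟨cellOf_mem hS hv, entry_cellOf hS hv⟩

lemma entry_lt_card (hS : IsSYT μ S) {i j : ℕ} (hc : (i, j) ∈ μ) : S i j < μ.card := by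
  have hsurj : Set.SurjOn S.cellOf (range μ.card) μ.cells :=
    surjOn_of_injOn_of_card_le _
      (fun v hv => (mem_cells _).2 (cellOf_mem hS (mem_range.1 hv)))
      (fun v hv w hw h => by
        rw [← entry_cellOf hS (mem_range.1 hv), h, entry_cellOf hS (mem_range.1 hw)])
      (card_range _).ge
  obtain ⟨v, hv, hcv⟩ := hsurj ((mem_cells _).2 hc)
  have := entry_cellOf hS (mem_range.1 hv)
  rw [hcv] at this
  exact this ▸ mem_range.1 hv

lemma cellOf_entry (hS : IsSYT μ S) {c : ℕ × ℕ} (hc : c ∈ μ) : S.cellOf (S c.1 c.2) = c :=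
  (eq_cellOf hS (entry_lt_card hS hc) hc rfl).symm

lemma rankIn_entry (hS : IsSYT μ S) {c : ℕ × ℕ} (hc : c ∈ μ) :
    rankIn μ.cells (fun x : ℕ × ℕ => S x.1 x.2) c = S c.1 c.2 := by
  have hlt := entry_lt_card hS hc
  refine .trans ?_ (card_range (S c.1 c.2))
  refine card_nbij' (fun x => S x.1 x.2) S.cellOf ?_ ?_ ?_ ?_
  · exact fun x hx => mem_range.2 (mem_filter.1 hx).2
  · intro v hv
    have hv' := mem_range.1 hv
    refine mem_filter.2 ⟨(mem_cells _).2 (cellOf_mem hS (hv'.trans hlt)), ?_⟩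
    exact (entry_cellOf hS (hv'.trans hlt)).trans_lt hv'
  · exact fun x hx => cellOf_entry hS ((mem_cells _).1 (mem_filter.1 hx).1)
  · exact fun v hv => entry_cellOf hS ((mem_range.1 hv).trans hlt)

lemma succ_mem_des_iff (hS : IsSYT μ S) {d : ℕ} (hd : d + 1 < μ.card) :
    d + 1 ∈ Des μ S ↔ (S.cellOf (d + 1)).2 ≤ (S.cellOf d).2 := by
  constructor
  · rintro ⟨-, -, i, j, i', j', hc, hc', hv, hv', hle⟩
    rw [Nat.add_sub_cancel] at hv'
    rwa [← eq_cellOf hS hd hc hv, ← eq_cellOf hS (by omega) hc' hv']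
  · intro hle
    refine ⟨by omega, by omega, (S.cellOf (d + 1)).1, (S.cellOf (d + 1)).2, (S.cellOf d).1,
      (S.cellOf d).2, cellOf_mem hS hd, cellOf_mem hS (by omega),
      entry_cellOf hS hd, ?_, hle⟩
    rw [Nat.add_sub_cancel, entry_cellOf hS (by omega)]

open scoped Classical in
noncomputable def desCount (S : SemistandardYoungTableau μ) : ℕ → ℕ
  | 0 => 0
  | e + 1 => S.desCount e + if e + 1 ∈ Des μ S then 1 else 0

lemma desCount_succ_of_mem {e : ℕ} (h : e + 1 ∈ Des μ S) :
    S.desCount (e + 1) = S.desCount e + 1 := by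
  simp [desCount, h]

lemma desCount_succ_of_notMem {e : ℕ} (h : e + 1 ∉ Des μ S) :
    S.desCount (e + 1) = S.desCount e := by
  simp [desCount, h]

lemma desCount_mono : Monotone S.desCount :=
  monotone_nat_of_le_succ fun e => by
    by_cases h : e + 1 ∈ Des μ S
    · rw [desCount_succ_of_mem h]; omega
    · rw [desCount_succ_of_notMem h]

lemma col_cellOf_lt_of_desCount_eq (hS : IsSYT μ S) {e e' : ℕ} (he : e < e')
    (he' : e' < μ.card) (h : S.desCount e' = S.desCount e) :
    (S.cellOf e).2 < (S.cellOf e').2 := by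
  induction e', he using Nat.le_induction with
  | base =>
    have hnd : e + 1 ∉ Des μ S := fun hd => by rw [desCount_succ_of_mem hd] at h; omega
    exact not_le.1 fun hle => hnd ((succ_mem_des_iff hS he').2 hle)
  | succ e' he ih =>
    have h1 := desCount_mono (S := S) (show e' ≤ e' + 1 by omega)
    have h2 := desCount_mono (S := S) (show e ≤ e' by omega)
    have hnd : e' + 1 ∉ Des μ S := fun hd => by rw [desCount_succ_of_mem hd] at h1 h; omega
    have hstep := not_le.1 fun hle => hnd ((succ_mem_des_iff hS he').2 hle)
    exact (ih (by omega) (by omega)).trans hstep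

lemma col_lt_of_desCount_eq (hS : IsSYT μ S) {x y : ℕ × ℕ} (hx : x ∈ μ) (hy : y ∈ μ)
    (hxy : S x.1 x.2 < S y.1 y.2) (h : S.desCount (S y.1 y.2) = S.desCount (S x.1 x.2)) :
    x.2 < y.2 := by
  have := col_cellOf_lt_of_desCount_eq hS hxy (entry_lt_card hS hy) h
  rwa [cellOf_entry hS hx, cellOf_entry hS hy] at this

lemma exists_mem_des_of_le_desCount {v e : ℕ} (hv : 0 < v) (he : v ≤ S.desCount e) :
    ∃ d < e, d + 1 ∈ Des μ S ∧ S.desCount d + 1 = v ∧ S.desCount (d + 1) = v := by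
  classical
  have hex : ∃ k, v ≤ S.desCount k := ⟨e, he⟩
  obtain ⟨d, hd⟩ : ∃ d, Nat.find hex = d + 1 :=
    Nat.exists_eq_succ_of_ne_zero fun h0 => by
      have := Nat.find_spec hex
      rw [h0] at this
      exact absurd this (by rw [desCount]; omega)
  have hbelow : S.desCount d < v := not_le.1 (Nat.find_min hex (by omega))
  have habove : v ≤ S.desCount (d + 1) := hd ▸ Nat.find_spec hex
  have hde : d < e := by have := Nat.find_min' hex he; omega
  by_cases hdes : d + 1 ∈ Des μ S
  · have hstep := desCount_succ_of_mem hdes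
    exact ⟨d, hde, hdes, by omega, by omega⟩
  · rw [desCount_succ_of_notMem hdes] at habove
    omega

noncomputable def destandardize (S : SemistandardYoungTableau μ) (hS : IsSYT μ S) :
    SemistandardYoungTableau μ where
  entry i j := S.desCount (S i j)
  row_weak' hj hc := desCount_mono (S.row_weak hj hc)
  col_strict' {i1 i2 j} hi hc := by
    have hlt := S.col_strict hi hc
    refine (desCount_mono hlt.le).lt_of_ne fun heq => ?_
    have := col_lt_of_desCount_eq hS (x := (i1, j)) (y := (i2, j))
      (μ.up_left_mem hi.le le_rfl hc) hc hlt heq.symm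
    exact lt_irrefl _ this
  zeros' h := by rw [S.zeros h]; rfl

lemma destandardize_apply (hS : IsSYT μ S) (i j : ℕ) :
    S.destandardize hS i j = S.desCount (S i j) :=
  rfl

lemma isQY_destandardize (hS : IsSYT μ S) : IsQY μ (S.destandardize hS) := by
  rintro v hv ⟨i, j, hc, hval⟩
  obtain ⟨d, hd, hdes, hprev, hcur⟩ := exists_mem_des_of_le_desCount hv hval.ge
  have hdn : d + 1 < μ.card := by have := entry_lt_card hS hc; omega
  refine ⟨(S.cellOf (d + 1)).1, (S.cellOf (d + 1)).2, (S.cellOf d).1, (S.cellOf d).2,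
    cellOf_mem hS hdn, cellOf_mem hS (by omega), ?_, ?_, (succ_mem_des_iff hS hdn).1 hdes⟩
  · rw [destandardize_apply, entry_cellOf hS hdn, hcur]
  · rw [destandardize_apply, entry_cellOf hS (by omega)]
    omega

lemma maxEq_destandardize (hS : IsSYT μ S) (hn : 0 < μ.card) :
    MaxEq μ (S.destandardize hS) (S.desCount (μ.card - 1) + 1) := by
  refine ⟨fun i j hc => Nat.lt_succ_of_le (desCount_mono ?_), ?_⟩
  · have := entry_lt_card hS hc; omega
  · refine ⟨(S.cellOf (μ.card - 1)).1, (S.cellOf (μ.card - 1)).2,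
      cellOf_mem hS (by omega), ?_⟩
    rw [destandardize_apply, entry_cellOf hS (by omega), Nat.add_sub_cancel]

def keyOf (T : SemistandardYoungTableau μ) (c : ℕ × ℕ) : ℕ ×ₗ ℕ :=
  toLex (T c.1 c.2, c.2)

lemma keyOf_lt_keyOf {x y : ℕ × ℕ} :
    T.keyOf x < T.keyOf y ↔ T x.1 x.2 < T y.1 y.2 ∨ T x.1 x.2 = T y.1 y.2 ∧ x.2 < y.2 :=
  Prod.Lex.toLex_lt_toLex

lemma keyOf_injOn (T : SemistandardYoungTableau μ) : Set.InjOn T.keyOf μ.cells := by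
  rintro ⟨i, j⟩ hx ⟨i', j'⟩ hy h
  obtain ⟨hval, rfl : j = j'⟩ := Prod.ext_iff.1 (toLex.injective h)
  rcases lt_trichotomy i i' with hi | rfl | hi
  · exact absurd hval (T.col_strict hi ((mem_cells _).1 hy)).ne
  · rfl
  · exact absurd hval (T.col_strict hi ((mem_cells _).1 hx)).ne'

noncomputable def standardize (T : SemistandardYoungTableau μ) : SemistandardYoungTableau μ where
  entry i j := if (i, j) ∈ μ then rankIn μ.cells T.keyOf (i, j) else 0
  row_weak' {i j1 j2} hj hc := by
    have hc1 : (i, j1) ∈ μ := μ.up_left_mem le_rfl hj.le hc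
    rw [if_pos hc1, if_pos hc]
    refine rankIn_le_rankIn (Prod.Lex.toLex_le_toLex.2 ?_)
    rcases (T.row_weak hj hc).lt_or_eq with h | h
    · exact .inl h
    · exact .inr ⟨h, hj.le⟩
  col_strict' {i1 i2 j} hi hc := by
    have hc1 : (i1, j) ∈ μ := μ.up_left_mem hi.le le_rfl hc
    rw [if_pos hc1, if_pos hc]
    exact rankIn_lt_rankIn ((mem_cells _).2 hc1) (keyOf_lt_keyOf.2 (.inl (T.col_strict hi hc)))
  zeros' h := if_neg h

lemma standardize_apply {c : ℕ × ℕ} (hc : c ∈ μ) :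
    T.standardize c.1 c.2 = rankIn μ.cells T.keyOf c :=
  if_pos hc

lemma isSYT_standardize (T : SemistandardYoungTableau μ) : IsSYT μ T.standardize := by
  classical
  intro v hv
  have hv' : v ∈ μ.cells.image (rankIn μ.cells T.keyOf) := by
    rw [image_rankIn T.keyOf_injOn]
    exact mem_range.2 hv
  obtain ⟨c, hc, rfl⟩ := mem_image.1 hv'
  refine ⟨c, ⟨(mem_cells _).1 hc, standardize_apply ((mem_cells _).1 hc)⟩, ?_⟩
  rintro c' ⟨hc', hval⟩
  exact rankIn_injOn T.keyOf_injOn ((mem_cells _).2 hc') hc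
    ((standardize_apply hc').symm.trans hval)

lemma rankIn_cellOf_standardize {v : ℕ} (hv : v < μ.card) :
    rankIn μ.cells T.keyOf (T.standardize.cellOf v) = v := by
  rw [← standardize_apply (cellOf_mem T.isSYT_standardize hv)]
  exact entry_cellOf T.isSYT_standardize hv

lemma exists_entry_eq_of_isQY (hT : IsQY μ T) {i j v : ℕ} (hc : (i, j) ∈ μ)
    (hv : v ≤ T i j) :
    ∃ i' j', (i', j') ∈ μ ∧ T i' j' = v := by
  suffices ∀ k, (∃ i' j', (i', j') ∈ μ ∧ T i' j' = v + k) →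
      ∃ i' j', (i', j') ∈ μ ∧ T i' j' = v from
    this _ ⟨i, j, hc, (Nat.add_sub_cancel' hv).symm⟩
  intro k
  induction k with
  | zero => exact id
  | succ k ih =>
    intro h
    obtain ⟨-, -, i', j', -, hc', -, hv', -⟩ := hT (v + (k + 1)) (by omega) h
    exact ih ⟨i', j', hc', by omega⟩

lemma entry_eq_of_adjacent (hT : IsQY μ T) {x y : ℕ × ℕ} (hy : y ∈ μ)
    (hxy : T.keyOf x < T.keyOf y)
    (hadj : ∀ z ∈ μ, ¬(T.keyOf x < T.keyOf z ∧ T.keyOf z < T.keyOf y)) :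
    T y.1 y.2 = T x.1 x.2 + if y.2 ≤ x.2 then 1 else 0 := by
  rcases keyOf_lt_keyOf.1 hxy with hlt | ⟨heq, hcol⟩
  · obtain ⟨a, b, a', b', ha, ha', hva, hva', hbb'⟩ :=
      hT (T y.1 y.2) (by omega) ⟨y.1, y.2, hy, rfl⟩
    have hval : T y.1 y.2 = T x.1 x.2 + 1 := by
      by_contra hne
      exact hadj (a', b') ha' ⟨keyOf_lt_keyOf.2 (.inl (by simp only; omega)),
        keyOf_lt_keyOf.2 (.inl (by simp only; omega))⟩
    -- adjacency makes `y` the leftmost cell with entry `T y` and `x` the rightmost with `T x`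
    have hyb : y.2 ≤ b := not_lt.1 fun hb => hadj (a, b) ha
      ⟨keyOf_lt_keyOf.2 (.inl (by simp only; omega)), keyOf_lt_keyOf.2 (.inr ⟨hva, hb⟩)⟩
    have hbx : b' ≤ x.2 := not_lt.1 fun hb => hadj (a', b') ha'
      ⟨keyOf_lt_keyOf.2 (.inr ⟨by simp only; omega, hb⟩),
        keyOf_lt_keyOf.2 (.inl (by simp only; omega))⟩
    rw [if_pos (by omega), hval]
  · rw [if_neg (by omega), heq, add_zero]

lemma desCount_standardize (hT : IsQY μ T) {e : ℕ} (he : e < μ.card) :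
    T.standardize.desCount e = T (T.standardize.cellOf e).1 (T.standardize.cellOf e).2 := by
  have hS := T.isSYT_standardize
  induction e with
  | zero =>
    obtain ⟨i, j, hc, h0⟩ := exists_entry_eq_of_isQY hT (cellOf_mem hS he) (Nat.zero_le _)
    refine (Nat.eq_zero_of_not_pos fun hpos => ?_).symm
    have := rankIn_lt_rankIn ((mem_cells _).2 hc)
      (keyOf_lt_keyOf (T := T) (x := (i, j)) (y := T.standardize.cellOf 0) |>.2
        (.inl (by simp only; omega)))
    rw [rankIn_cellOf_standardize he] at this
    exact Nat.not_lt_zero _ this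
  | succ e ih =>
    have hx := cellOf_mem hS (Nat.lt_of_succ_lt he)
    have hy := cellOf_mem hS he
    have hrx := rankIn_cellOf_standardize (T := T) (Nat.lt_of_succ_lt he)
    have hry := rankIn_cellOf_standardize (T := T) he
    have hxy : T.keyOf (T.standardize.cellOf e) < T.keyOf (T.standardize.cellOf (e + 1)) :=
      lt_of_rankIn_lt (s := μ.cells) (by rw [hrx, hry]; exact Nat.lt_succ_self e)
    have hadj : ∀ z ∈ μ, ¬(T.keyOf (T.standardize.cellOf e) < T.keyOf z ∧
        T.keyOf z < T.keyOf (T.standardize.cellOf (e + 1))) := fun z hz ⟨h1, h2⟩ => by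
      have := rankIn_lt_rankIn ((mem_cells _).2 hx) h1
      have := rankIn_lt_rankIn ((mem_cells _).2 hz) h2
      omega
    rw [entry_eq_of_adjacent hT hy hxy hadj, ← ih (Nat.lt_of_succ_lt he)]
    by_cases hd : e + 1 ∈ Des μ T.standardize
    · rw [desCount_succ_of_mem hd, if_pos ((succ_mem_des_iff hS he).1 hd)]
    · rw [desCount_succ_of_notMem hd, if_neg (mt (succ_mem_des_iff hS he).2 hd), add_zero]

lemma desCount_standardize_last (hT : IsQY μ T) {m : ℕ}
    (hmax : MaxEq μ T m) (hn : 0 < μ.card) : T.standardize.desCount (μ.card - 1) = m - 1 := by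
  have hlast : μ.card - 1 < μ.card := Nat.sub_lt hn one_pos
  have hc := cellOf_mem T.isSYT_standardize hlast
  rw [desCount_standardize hT hlast]
  obtain ⟨i, j, hz, hval⟩ := hmax.2
  have hlt : T (T.standardize.cellOf (μ.card - 1)).1 (T.standardize.cellOf (μ.card - 1)).2 < m :=
    hmax.1 _ _ hc
  refine le_antisymm (by omega) (not_lt.1 fun hne => ?_)
  have h1 := rankIn_lt_rankIn ((mem_cells _).2 hc)
    (keyOf_lt_keyOf (T := T) (y := (i, j)) |>.2 (.inl (by simp only; omega)))
  have h2 : _ < μ.card := rankIn_lt_card (f := T.keyOf) ((mem_cells _).2 hz)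
  rw [rankIn_cellOf_standardize hlast] at h1
  omega

lemma destandardize_standardize (hT : IsQY μ T) :
    T.standardize.destandardize T.isSYT_standardize = T := by
  have hS := T.isSYT_standardize
  ext i j
  by_cases hc : (i, j) ∈ μ
  · rw [destandardize_apply, desCount_standardize hT (entry_lt_card hS hc),
      cellOf_entry hS (c := (i, j)) hc]
  · rw [SemistandardYoungTableau.zeros _ hc, T.zeros hc]

lemma keyOf_destandardize_lt_iff (hS : IsSYT μ S)
    {x y : ℕ × ℕ} (hx : x ∈ μ) (hy : y ∈ μ) :
    (S.destandardize hS).keyOf x < (S.destandardize hS).keyOf y ↔ S x.1 x.2 < S y.1 y.2 := by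
  have mono : ∀ {x y : ℕ × ℕ}, x ∈ μ → y ∈ μ → S x.1 x.2 < S y.1 y.2 →
      (S.destandardize hS).keyOf x < (S.destandardize hS).keyOf y := fun hx hy hxy => by
    rw [keyOf_lt_keyOf, destandardize_apply, destandardize_apply]
    rcases (desCount_mono hxy.le).lt_or_eq with h | h
    · exact .inl h
    · exact .inr ⟨h, col_lt_of_desCount_eq hS hx hy hxy h.symm⟩
  refine ⟨fun h => ?_, mono hx hy⟩
  rcases lt_trichotomy (S x.1 x.2) (S y.1 y.2) with hlt | heq | hgt
  · exact hlt
  · rw [← cellOf_entry hS hx, ← cellOf_entry hS hy, heq] at h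
    exact absurd h (lt_irrefl _)
  · exact absurd h (mono hy hx hgt).not_gt

lemma standardize_destandardize (hS : IsSYT μ S) :
    (S.destandardize hS).standardize = S := by
  ext i j
  by_cases hc : (i, j) ∈ μ
  · rw [standardize_apply (c := (i, j)) hc,
      rankIn_congr (g := fun c : ℕ × ℕ => S c.1 c.2)
        (fun x hx y hy => keyOf_destandardize_lt_iff hS ((mem_cells _).1 hx) ((mem_cells _).1 hy))
        ((mem_cells _).2 hc),
      rankIn_entry hS hc]
  · rw [SemistandardYoungTableau.zeros _ hc, S.zeros hc]

lemma mem_iff_swap_mem_of_transpose_eq (h : μ.transpose = δ) {i j : ℕ} :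
    (i, j) ∈ δ ↔ (j, i) ∈ μ :=
  h ▸ YoungDiagram.mem_transpose

-- Stated for any `δ` equal to `μ.transpose`, so that transposing back lands in `μ` itself.
def transposeSYT (S : SemistandardYoungTableau μ) (hS : IsSYT μ S) (h : μ.transpose = δ) :
    SemistandardYoungTableau δ where
  entry i j := S j i
  row_weak' hj hc := (S.col_strict hj ((mem_iff_swap_mem_of_transpose_eq h).1 hc)).le
  col_strict' {i1 i2 j} hi hc := by
    have hc2 := (mem_iff_swap_mem_of_transpose_eq h).1 hc
    have hc1 : (j, i1) ∈ μ := μ.up_left_mem le_rfl hi.le hc2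
    refine (S.row_weak hi hc2).lt_of_ne fun heq => hi.ne ?_
    have := (eq_cellOf hS (entry_lt_card hS hc2) hc1 heq).trans
      (eq_cellOf hS (entry_lt_card hS hc2) hc2 rfl).symm
    exact (Prod.ext_iff.1 this).2
  zeros' hc := S.zeros (mt (mem_iff_swap_mem_of_transpose_eq h).2 hc)

lemma card_eq_of_transpose_eq (h : μ.transpose = δ) : δ.card = μ.card :=
  h ▸ μ.card_transpose

lemma isSYT_transposeSYT (hS : IsSYT μ S) (h : μ.transpose = δ) :
    IsSYT δ (S.transposeSYT hS h) := by
  intro v hv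
  rw [card_eq_of_transpose_eq h] at hv
  refine ⟨(S.cellOf v).swap, ⟨(mem_iff_swap_mem_of_transpose_eq h).2 (cellOf_mem hS hv),
    entry_cellOf hS hv⟩, fun c ⟨hc, hval⟩ => ?_⟩
  rw [← eq_cellOf hS hv ((mem_iff_swap_mem_of_transpose_eq h).1 hc) hval]
  rfl

lemma cellOf_transposeSYT (hS : IsSYT μ S) (h : μ.transpose = δ) {v : ℕ} (hv : v < μ.card) :
    (S.transposeSYT hS h).cellOf v = (S.cellOf v).swap :=
  (eq_cellOf (isSYT_transposeSYT hS h) (card_eq_of_transpose_eq h ▸ hv)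
    ((mem_iff_swap_mem_of_transpose_eq h).2 (cellOf_mem hS hv)) (entry_cellOf hS hv)).symm

lemma col_cellOf_succ_le_iff (hS : IsSYT μ S) {d : ℕ} (hd : d + 1 < μ.card) :
    (S.cellOf (d + 1)).2 ≤ (S.cellOf d).2 ↔ (S.cellOf d).1 < (S.cellOf (d + 1)).1 := by
  have hp := cellOf_mem hS hd
  have hpv := entry_cellOf hS hd
  have hq := cellOf_mem hS (Nat.lt_of_succ_lt hd)
  have hqv := entry_cellOf hS (Nat.lt_of_succ_lt hd)
  have huniq : ∀ c ∈ μ, S c.1 c.2 = d + 1 → c = S.cellOf (d + 1) := fun _ => eq_cellOf hS hd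
  generalize S.cellOf (d + 1) = p at *
  generalize S.cellOf d = q at *
  obtain ⟨a, b⟩ := p
  obtain ⟨a', b'⟩ := q
  dsimp only at *
  constructor
  · intro hb
    by_contra ha
    have hz : (a, b') ∈ μ := μ.up_left_mem (not_lt.1 ha) le_rfl hq
    have := S.row_weak_of_le hb hz
    have := S.col_weak (not_lt.1 ha) hq
    omega
  · intro ha
    by_contra hb
    have hz : (a, b') ∈ μ := μ.up_left_mem le_rfl (not_le.1 hb).le hp
    have := S.col_strict ha hz
    have := S.row_weak (not_le.1 hb) hp
    have := huniq (a, b') hz (by dsimp only; omega)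
    simp only [Prod.mk.injEq] at this
    omega

lemma succ_mem_des_transposeSYT_iff (hS : IsSYT μ S) (h : μ.transpose = δ) {d : ℕ}
    (hd : d + 1 < μ.card) : d + 1 ∈ Des δ (S.transposeSYT hS h) ↔ d + 1 ∉ Des μ S := by
  rw [succ_mem_des_iff (isSYT_transposeSYT hS h) (card_eq_of_transpose_eq h ▸ hd),
    succ_mem_des_iff hS hd, cellOf_transposeSYT hS h hd,
    cellOf_transposeSYT hS h (Nat.lt_of_succ_lt hd), Prod.snd_swap, Prod.snd_swap,
    col_cellOf_succ_le_iff hS hd, not_lt]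

lemma desCount_transposeSYT_add_desCount (hS : IsSYT μ S) (h : μ.transpose = δ) {e : ℕ}
    (he : e < μ.card) : (S.transposeSYT hS h).desCount e + S.desCount e = e := by
  induction e with
  | zero => rfl
  | succ e ih =>
    have ih := ih (Nat.lt_of_succ_lt he)
    have hdes := succ_mem_des_transposeSYT_iff hS h he
    by_cases hd : e + 1 ∈ Des μ S
    · rw [desCount_succ_of_mem hd, desCount_succ_of_notMem fun hd' => hdes.1 hd' hd]
      omega
    · rw [desCount_succ_of_notMem hd, desCount_succ_of_mem (hdes.2 hd)]
      omega

end SemistandardYoungTableau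

open SemistandardYoungTableau

noncomputable def numSYTWithDescents (μ : YoungDiagram) (k : ℕ) : ℕ :=
  Nat.card {S : SemistandardYoungTableau μ // IsSYT μ S ∧ S.desCount (μ.card - 1) = k}

lemma QYTeq_eq_numSYTWithDescents {μ : YoungDiagram} {m : ℕ} (hn : 0 < μ.card) (hm : 0 < m) :
    QYTeq μ m = numSYTWithDescents μ (m - 1) :=
  Nat.card_congr
    { toFun T := ⟨T.1.standardize, T.1.isSYT_standardize,
        desCount_standardize_last T.2.1 T.2.2 hn⟩
      invFun S := ⟨S.1.destandardize S.2.1, isQY_destandardize S.2.1, by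
        simpa [S.2.2, Nat.sub_add_cancel hm] using maxEq_destandardize S.2.1 hn⟩
      left_inv T := Subtype.ext (destandardize_standardize T.2.1)
      right_inv S := Subtype.ext (standardize_destandardize S.2.1) }

lemma numSYTWithDescents_transpose {μ : YoungDiagram} {k : ℕ} (hk : k < μ.card) :
    numSYTWithDescents μ k = numSYTWithDescents μ.transpose (μ.card - 1 - k) := by
  have hcard := μ.card_transpose
  have hlast : μ.card - 1 < μ.card := by omega
  exact Nat.card_congr
    { toFun := fun ⟨S, hS, hdes⟩ => ⟨S.transposeSYT hS rfl, isSYT_transposeSYT hS rfl, by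
        have := desCount_transposeSYT_add_desCount hS rfl hlast
        rw [hcard]; omega⟩
      invFun := fun ⟨S, hS, hdes⟩ => ⟨S.transposeSYT hS μ.transpose_transpose,
        isSYT_transposeSYT hS μ.transpose_transpose, by
        have := desCount_transposeSYT_add_desCount hS μ.transpose_transpose (hcard ▸ hlast)
        rw [hcard] at this hdes; omega⟩
      left_inv := fun ⟨_, _, _⟩ => rfl
      right_inv := fun ⟨_, _, _⟩ => rfl }

lemma QYTeq_eq_zero {μ : YoungDiagram} {m : ℕ} (h : m = 0 ∨ μ.card < m) : QYTeq μ m = 0 := by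
  refine Nat.card_eq_zero.2 (.inl ⟨fun ⟨T, hT, hmax⟩ => ?_⟩)
  obtain ⟨i, j, hc, hval⟩ := hmax.2
  have hlt := hmax.1 i j hc
  rcases h with rfl | hm
  · exact Nat.not_lt_zero _ hlt
  · classical
    have hsub : range m ⊆ μ.cells.image fun c => T c.1 c.2 := fun v hv => by
      obtain ⟨i', j', hc', hv'⟩ := exists_entry_eq_of_isQY hT hc (show v ≤ T i j by
        have := mem_range.1 hv; omega)
      exact mem_image.2 ⟨(i', j'), (mem_cells _).2 hc', hv'⟩
    have := (card_le_card hsub).trans card_image_le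
    rw [card_range] at this
    exact absurd hm (not_lt.2 this)

/-- For a partition `λ` of size `n` with conjugate `λ'`, and any `m`,
`QYT_{=m}(λ) = QYT_{=(n+1)-m}(λ')`. -/
theorem qyt_conjugate_symmetry (μ : YoungDiagram) (m : ℕ) :
    QYTeq μ m = QYTeq μ.transpose (μ.card + 1 - m) := by
  have hcard := μ.card_transpose
  rcases Nat.eq_zero_or_pos m with rfl | hm
  · rw [QYTeq_eq_zero (.inl rfl), QYTeq_eq_zero (.inr (by omega))]
  rcases lt_or_ge μ.card m with hlt | hle
  · rw [QYTeq_eq_zero (.inr hlt), QYTeq_eq_zero (.inl (by omega))]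
  rw [QYTeq_eq_numSYTWithDescents (by omega) hm,
    QYTeq_eq_numSYTWithDescents (by omega) (by omega), numSYTWithDescents_transpose (by omega)]
  congr 1
  omega
end

section
/- Under the bijection between quasi-Yamanouchi tableaux QYT_{≤m}(λ) (m ≥ n−(λ₁−1)) and standard Young tableaux SYT(λ), a quasi-Yamanouchi tableau with maximum entry exactly k corresponds to a standard Young tableau with exactly k−1 descents. -/
open YoungDiagram

/-! Destandardization steps preserve the order of cells by (entry, column), and on a standard
tableau this order is the order of the entries. Hence, reading the cells of `T` in the order
`1, …, n`, the entries of `Q` weakly increase, and they increase from `d` to `d + 1` exactly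
when `d + 1` is a descent of `T`: one direction because equal entries of `Q` are read left to
right, the other because `Q`, admitting no further step, is quasi-Yamanouchi. That property
also makes the entries of `Q` an interval `1, …, k`, so they increase exactly `k - 1` times. -/

theorem ncard_ascents_eq {g : ℕ → ℕ} {n k : ℕ} (hmono : MonotoneOn g (Set.Iio n))
    (hlt : ∀ d < n, g d < k) (hsurj : ∀ v < k, ∃ d < n, g d = v) :
    {d | 1 ≤ d ∧ d < n ∧ g (d - 1) < g d}.ncard = k - 1 := by
  set S := {d | 1 ≤ d ∧ d < n ∧ g (d - 1) < g d}
  have hstrict : ∀ d ∈ S, ∀ d' ∈ S, d < d' → g d < g d' := by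
    rintro d ⟨-, hd, -⟩ d' ⟨-, hd', hasc'⟩ hdd'
    have : g d ≤ g (d' - 1) :=
      hmono (Set.mem_Iio.2 hd) (Set.mem_Iio.2 (by omega)) (by omega)
    omega
  have hbij : Set.BijOn g S (Set.Icc 1 (k - 1)) := by
    refine ⟨fun d ⟨_, hd, hasc⟩ => ⟨by omega, by have := hlt d hd; omega⟩, ?_, ?_⟩
    · intro d hd d' hd' hgg
      rcases lt_trichotomy d d' with h | h | h
      · exact absurd hgg (hstrict d hd d' hd' h).ne
      · exact h
      · exact absurd hgg (hstrict d' hd' d hd h).ne'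
    · rintro v ⟨hv1, hvk⟩
      classical
      have hex : ∃ d, d < n ∧ g d = v := hsurj v (by omega)
      obtain ⟨hdn, hdv⟩ := Nat.find_spec hex
      obtain ⟨e, he, hge⟩ := hsurj 0 (by omega)
      have hd1 : 1 ≤ Nat.find hex := by
        by_contra! h0
        have : g (Nat.find hex) ≤ g e :=
          hmono (Set.mem_Iio.2 hdn) (Set.mem_Iio.2 he) (by omega)
        omega
      have hprev : g (Nat.find hex - 1) ≤ g (Nat.find hex) :=
        hmono (Set.mem_Iio.2 (by omega)) (Set.mem_Iio.2 hdn) (by omega)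
      have hne : ¬ (Nat.find hex - 1 < n ∧ g (Nat.find hex - 1) = v) :=
        Nat.find_min hex (by omega)
      exact ⟨Nat.find hex, ⟨hd1, hdn, by omega⟩, hdv⟩
  rw [← hbij.injOn.ncard_image, hbij.image_eq, Set.ncard_Icc_nat]
  omega

section

variable {μ : YoungDiagram}

def EntryColLT (R : SemistandardYoungTableau μ) (p q : ℕ × ℕ) : Prop :=
  R p.1 p.2 < R q.1 q.2 ∨ (R p.1 p.2 = R q.1 q.2 ∧ p.2 < q.2)

theorem EntryColLT.entry_le {R : SemistandardYoungTableau μ} {p q : ℕ × ℕ}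
    (h : EntryColLT R p q) : R p.1 p.2 ≤ R q.1 q.2 := by
  rcases h with h | ⟨h, -⟩ <;> omega

theorem StepAt.entryColLT_iff {R R' : SemistandardYoungTableau μ} {v : ℕ}
    (h : StepAt μ R R' v) {p q : ℕ × ℕ} (hp : p ∈ μ) (hq : q ∈ μ) :
    EntryColLT R p q ↔ EntryColLT R' p q := by
  obtain ⟨-, -, hsep, hR'⟩ := h
  have hpq := hsep p.1 p.2 q.1 q.2 hp hq
  have hqp := hsep q.1 q.2 p.1 p.2 hq hp
  simp only [EntryColLT, hR' p.1 p.2 hp, hR' q.1 q.2 hq]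
  split_ifs <;> omega

theorem entryColLT_iff_of_reflTransGen {T Q : SemistandardYoungTableau μ}
    (h : Relation.ReflTransGen (Step μ) T Q) {p q : ℕ × ℕ} (hp : p ∈ μ) (hq : q ∈ μ) :
    EntryColLT T p q ↔ EntryColLT Q p q := by
  induction h with
  | refl => rfl
  | tail _ hstep ih =>
    obtain ⟨v, hv⟩ := hstep
    exact ih.trans (hv.entryColLT_iff hp hq)

def SemistandardYoungTableau.decrement (Q : SemistandardYoungTableau μ) (v : ℕ)
    (hsep : ∀ i j i' j' : ℕ, (i, j) ∈ μ → (i', j') ∈ μ → Q i j = v → Q i' j' = v - 1 → j' < j) :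
    SemistandardYoungTableau μ where
  entry i j := if Q i j = v ∧ (i, j) ∈ μ then v - 1 else Q i j
  row_weak' {i j₁ j₂} hj h₂ := by
    have h₁ : (i, j₁) ∈ μ := μ.up_left_mem le_rfl hj.le h₂
    have := Q.row_weak hj h₂
    simp only [h₁, h₂, and_true]
    split_ifs <;> omega
  col_strict' {i₁ i₂ j} hi h₂ := by
    have h₁ : (i₁, j) ∈ μ := μ.up_left_mem hi.le le_rfl h₂
    have := Q.col_strict hi h₂
    have hne : Q i₂ j = v → Q i₁ j ≠ v - 1 := fun h h' =>
      lt_irrefl j (hsep i₂ j i₁ j h₂ h₁ h h')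
    simp only [h₁, h₂, and_true]
    split_ifs <;> omega
  zeros' h := by simp [h, Q.zeros h]

theorem isQY_of_forall_not_step {Q : SemistandardYoungTableau μ}
    (h : ∀ Q' : SemistandardYoungTableau μ, ¬ Step μ Q Q') : IsQY μ Q := by
  intro v hv hex
  by_contra! hsep
  refine h (Q.decrement v hsep) ⟨v, hv, hex, hsep, fun i j hij => ?_⟩
  show (if Q i j = v ∧ (i, j) ∈ μ then v - 1 else Q i j) = _
  simp only [hij, and_true]

theorem IsQY.exists_entry_eq_of_le {Q : SemistandardYoungTableau μ} (hQ : IsQY μ Q) {m w : ℕ}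
    (hm : ∃ i j : ℕ, (i, j) ∈ μ ∧ Q i j = m) (hw : w ≤ m) :
    ∃ i j : ℕ, (i, j) ∈ μ ∧ Q i j = w := by
  induction m with
  | zero => rwa [Nat.le_zero.1 hw]
  | succ m ih =>
    rcases hw.eq_or_lt with rfl | hw
    · exact hm
    · obtain ⟨-, -, i', j', -, h', -, hQ', -⟩ := hQ (m + 1) m.succ_pos hm
      exact ih ⟨i', j', h', by simpa using hQ'⟩ (by omega)

theorem col_le_iff_lt_of_entry_eq_succ {T Q : SemistandardYoungTableau μ} (hQ : IsQY μ Q)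
    (hord : ∀ p ∈ μ, ∀ q ∈ μ, T p.1 p.2 < T q.1 q.2 ↔ EntryColLT Q p q)
    {p q : ℕ × ℕ} (hp : p ∈ μ) (hq : q ∈ μ) (hpq : T q.1 q.2 = T p.1 p.2 + 1) :
    q.2 ≤ p.2 ↔ Q p.1 p.2 < Q q.1 q.2 := by
  have hmono : ∀ a ∈ μ, ∀ b ∈ μ, Q a.1 a.2 < Q b.1 b.2 → T a.1 a.2 < T b.1 b.2 :=
    fun a ha b hb h => (hord a ha b hb).2 (Or.inl h)
  refine ⟨fun hcol => ?_, fun hlt => ?_⟩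
  · rcases (hord p hp q hq).1 (by omega) with h | ⟨-, h⟩
    · exact h
    · omega
  obtain ⟨i, j, i', j', ha, hb, hQa, hQb, hab⟩ := hQ _ (by omega) ⟨q.1, q.2, hq, rfl⟩
  -- `q` is the first cell carrying the entry `Q q`, and `p` the last carrying `Q q - 1`.
  have hqa : q.2 ≤ j := by
    by_contra! hjq
    have h₁ : T i j < T q.1 q.2 := (hord (i, j) ha q hq).2 (Or.inr ⟨hQa, hjq⟩)
    have h₂ : T p.1 p.2 < T i j := hmono p hp (i, j) ha (by simpa [hQa] using hlt)
    omega
  have hQpb : Q p.1 p.2 = Q i' j' := by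
    by_contra hne
    have h₁ : T p.1 p.2 < T i' j' := hmono p hp (i', j') hb (by simp only; omega)
    have h₂ : T i' j' < T q.1 q.2 := hmono (i', j') hb q hq (by simp only; omega)
    omega
  have hbp : j' ≤ p.2 := by
    by_contra! hpj
    have h₁ : T p.1 p.2 < T i' j' := (hord p hp (i', j') hb).2 (Or.inr ⟨hQpb, hpj⟩)
    have h₂ : T i' j' < T q.1 q.2 := hmono (i', j') hb q hq (by simp only; omega)
    omega
  omega

namespace IsSYT

variable {T : SemistandardYoungTableau μ} (hT : IsSYT μ T)
include hT

theorem entry_lt_card {p : ℕ × ℕ} (hp : p ∈ μ) : T p.1 p.2 < μ.card := by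
  have hsub : Finset.range μ.card ⊆ μ.cells.image fun c => T c.1 c.2 := by
    intro v hv
    obtain ⟨c, ⟨hc, hcv⟩, -⟩ := hT v (Finset.mem_range.1 hv)
    exact Finset.mem_image.2 ⟨c, (mem_cells c).2 hc, hcv⟩
  have himage := Finset.eq_of_subset_of_card_le hsub (by simpa using Finset.card_image_le)
  simpa [← himage] using Finset.mem_image_of_mem (fun c => T c.1 c.2) ((mem_cells p).2 hp)

theorem eq_of_entry_eq {p q : ℕ × ℕ} (hp : p ∈ μ) (hq : q ∈ μ)
    (h : T p.1 p.2 = T q.1 q.2) : p = q := by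
  obtain ⟨c, -, hc⟩ := hT _ (hT.entry_lt_card hp)
  exact (hc p ⟨hp, rfl⟩).trans (hc q ⟨hq, h.symm⟩).symm

theorem exists_cell : ∃ c : ℕ → ℕ × ℕ, ∀ d < μ.card, c d ∈ μ ∧ T (c d).1 (c d).2 = d := by
  choose! c hc using fun d hd => (hT d hd).exists
  exact ⟨c, hc⟩

theorem entryColLT_iff_lt {p q : ℕ × ℕ} (hp : p ∈ μ) (hq : q ∈ μ) :
    EntryColLT T p q ↔ T p.1 p.2 < T q.1 q.2 := by
  refine ⟨?_, Or.inl⟩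
  rintro (h | ⟨h, hcol⟩)
  · exact h
  · rw [hT.eq_of_entry_eq hp hq h] at hcol
    exact absurd hcol (lt_irrefl _)

theorem mem_des_iff {c : ℕ → ℕ × ℕ} (hc : ∀ d < μ.card, c d ∈ μ ∧ T (c d).1 (c d).2 = d)
    {d : ℕ} : d ∈ Des μ T ↔ 1 ≤ d ∧ d < μ.card ∧ (c d).2 ≤ (c (d - 1)).2 := by
  constructor
  · rintro ⟨hd1, hdn, i, j, i', j', h, h', hTd, hTd', hjj⟩
    have hcd : c d = (i, j) :=
      hT.eq_of_entry_eq (hc d (by omega)).1 h (by rw [(hc d (by omega)).2, hTd])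
    have hcd' : c (d - 1) = (i', j') :=
      hT.eq_of_entry_eq (hc _ (by omega)).1 h' (by rw [(hc _ (by omega)).2, hTd'])
    exact ⟨hd1, by omega, by rwa [hcd, hcd']⟩
  · rintro ⟨hd1, hdn, hcol⟩
    exact ⟨hd1, by omega, _, _, _, _, (hc d hdn).1, (hc _ (by omega)).1, (hc d hdn).2,
      (hc _ (by omega)).2, hcol⟩

end IsSYT

end

/-- Under the bijection between `QYT_{≤m}(λ)` and `SYT(λ)` (given by
destandardization / restandardization), a quasi-Yamanouchi tableau `Q` with maximum
entry exactly `k` corresponds to a standard Young tableau `T` with exactly `k - 1`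
descents. -/
theorem qyt_max_entry_eq_descents_add_one (μ : YoungDiagram)
    (T Q : SemistandardYoungTableau μ) (hT : IsSYT μ T) (hdst : IsDst μ T Q)
    (k : ℕ) (hk : MaxEq μ Q k) : (Des μ T).ncard = k - 1 := by
  obtain ⟨hsteps, hfinal⟩ := hdst
  obtain ⟨hQk, hmax⟩ := hk
  have hQ : IsQY μ Q := isQY_of_forall_not_step hfinal
  have hord : ∀ p ∈ μ, ∀ q ∈ μ, T p.1 p.2 < T q.1 q.2 ↔ EntryColLT Q p q := fun p hp q hq =>
    (hT.entryColLT_iff_lt hp hq).symm.trans (entryColLT_iff_of_reflTransGen hsteps hp hq)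
  obtain ⟨c, hc⟩ := hT.exists_cell
  have hDes : Des μ T = {d | 1 ≤ d ∧ d < μ.card ∧
      Q (c (d - 1)).1 (c (d - 1)).2 < Q (c d).1 (c d).2} := by
    ext d
    refine (hT.mem_des_iff hc).trans (and_congr_right fun hd1 => and_congr_right fun hd => ?_)
    refine col_le_iff_lt_of_entry_eq_succ hQ hord (hc _ (by omega)).1 (hc d hd).1 ?_
    rw [(hc d hd).2, (hc _ (by omega)).2]
    omega
  rw [hDes]
  refine ncard_ascents_eq (fun d hd d' hd' hdd' => ?_) (fun d hd => hQk _ _ (hc d hd).1) ?_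
  · rcases hdd'.eq_or_lt with rfl | hlt
    · exact le_rfl
    refine ((hord _ (hc d hd).1 _ (hc d' hd').1).1 ?_).entry_le
    rwa [(hc d hd).2, (hc d' hd').2]
  · intro v hv
    obtain ⟨i, j, hij, hQij⟩ := hQ.exists_entry_eq_of_le hmax (show v ≤ k - 1 by omega)
    have hTij := hT.entry_lt_card hij
    have hcell : c (T i j) = (i, j) := hT.eq_of_entry_eq (hc _ hTij).1 hij (hc _ hTij).2
    exact ⟨T i j, hTij, by rw [hcell, hQij]⟩
end

section
/- Let λ₁ ≥ λ₂ ≥ 2, h₁ ≥ h₂ ≥ 2, h₁ ≤ m ≤ h₁+h₂+λ₂−3, and set m' = λ₁+λ₂+h₁+h₂−3−m. Then the rational number ((λ₁−λ₂+1)/(m−h₂+1))·C(λ₁+h₁−2, m−h₂)·C(λ₂+h₁−3, m−h₂)·C(m−h₂, m−h₁)·C(λ₂+h₂−4, h₂−2)·C(λ₁+h₂−3, h₂−2)/C(h₁−1, h₂−2) equals ((h₁−h₂+1)/(m'−λ₂+1))·C(h₁+λ₁−2, m'−λ₂)·C(h₂+λ₁−3, m'−λ₂)·C(m'−λ₂,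 m'−λ₁)·C(h₁+λ₂−3, λ₂−2)·C(h₂+λ₂−4, λ₂−2)/C(λ₁−1, λ₂−2). -/
/-!
Substitute `λ₂ = q + 2`, `λ₁ = λ₂ + d`, `h₂ = s + 2`, `h₁ = h₂ + r`, `m = h₁ + a`; then
`m' = λ₁ + e` with `a + e = q + s + 1`. Writing every binomial coefficient as a quotient of
factorials, the left-hand side becomes an expression that is invariant under
`(q, d, a) ↔ (s, r, e)`, and this swap is exactly the exchange `λ ↔ h`, `m ↔ m'` that turns
the left-hand side into the right-hand side.
-/

open YoungDiagram

open Nat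

noncomputable def productFormula (l1 l2 h1 h2 m : ℕ) : ℚ :=
  ((l1 - l2 + 1 : ℕ) : ℚ) / ((m - h2 + 1 : ℕ) : ℚ) *
    ((l1 + h1 - 2).choose (m - h2) : ℚ) * ((l2 + h1 - 3).choose (m - h2) : ℚ) *
    ((m - h2).choose (m - h1) : ℚ) * ((l2 + h2 - 4).choose (h2 - 2) : ℚ) *
    ((l1 + h2 - 3).choose (h2 - 2) : ℚ) / (((h1 - 1).choose (h2 - 2) : ℕ) : ℚ)

noncomputable def symmetricProduct (q d s r a e : ℕ) : ℚ :=
  (d + 1) * (r + 1) * ((q + d + s + r + 2)! * (q + s)! * (q + s + r + 1)! * (q + d + s + 1)! /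
    ((a + r + 1)! * (d + e + 1)! * a ! * e ! * q ! * s ! * (q + d + 1)! * (s + r + 1)!))

theorem symmetricProduct_swap (q d s r a e : ℕ) :
    symmetricProduct q d s r a e = symmetricProduct s r q d e a := by
  unfold symmetricProduct
  ring_nf

theorem productFormula_eq_symmetricProduct {l1 l2 h1 h2 m : ℕ}
    (hl2 : 2 ≤ l2) (hl : l2 ≤ l1) (hh2 : 2 ≤ h2) (hh : h2 ≤ h1)
    (hm1 : h1 ≤ m) (hm2 : m ≤ h1 + h2 + l2 - 3) :
    productFormula l1 l2 h1 h2 m =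
      symmetricProduct (l2 - 2) (l1 - l2) (h2 - 2) (h1 - h2) (m - h1) (h1 + h2 + l2 - 3 - m) := by
  obtain ⟨q, rfl⟩ : ∃ q, l2 = q + 2 := ⟨l2 - 2, by omega⟩
  obtain ⟨d, rfl⟩ : ∃ d, l1 = q + 2 + d := ⟨l1 - (q + 2), by omega⟩
  obtain ⟨s, rfl⟩ : ∃ s, h2 = s + 2 := ⟨h2 - 2, by omega⟩
  obtain ⟨r, rfl⟩ : ∃ r, h1 = s + 2 + r := ⟨h1 - (s + 2), by omega⟩
  obtain ⟨a, rfl⟩ : ∃ a, m = s + 2 + r + a := ⟨m - (s + 2 + r), by omega⟩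
  obtain ⟨e, hae⟩ : ∃ e, a + e = q + s + 1 := ⟨q + s + 1 - a, by omega⟩
  unfold productFormula symmetricProduct
  -- bring every binomial coefficient into the form `(x + y).choose x`
  rw [show q + 2 + d - (q + 2) = d by omega, show s + 2 + r + a - (s + 2) = r + a by omega,
    show q + 2 + d + (s + 2 + r) - 2 = (r + a) + (d + e + 1) by omega,
    show q + 2 + (s + 2 + r) - 3 = (r + a) + e by omega,
    show s + 2 + r + a - (s + 2 + r) = a by omega, show r + a = a + r by omega,
    show q + 2 + (s + 2) - 4 = s + q by omega, show s + 2 - 2 = s by omega,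
    show q + 2 + d + (s + 2) - 3 = s + (q + d + 1) by omega,
    show s + 2 + r - 1 = s + (r + 1) by omega, show q + 2 - 2 = q by omega,
    show s + 2 + r - (s + 2) = r by omega,
    show s + 2 + r + (s + 2) + (q + 2) - 3 - (s + 2 + r + a) = e by omega]
  simp only [Nat.cast_add_choose]
  rw [show a + r + (d + e + 1) = q + d + s + r + 2 by omega,
    show a + r + e = q + s + r + 1 by omega, show s + q = q + s by omega,
    show s + (q + d + 1) = q + d + s + 1 by omega, show s + (r + 1) = s + r + 1 by omega,
    Nat.factorial_succ (d + e), Nat.factorial_succ (a + r), Nat.factorial_succ r]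
  push_cast
  field_simp

/-- the symmetry identity between the two product formulas, where
`m' = λ₁ + λ₂ + h₁ + h₂ - 3 - m`. -/
theorem product_formula_symmetry (l1 l2 h1 h2 m : ℕ)
    (hl2 : 2 ≤ l2) (hl : l2 ≤ l1) (hh2 : 2 ≤ h2) (hh : h2 ≤ h1)
    (hm1 : h1 ≤ m) (hm2 : m ≤ h1 + h2 + l2 - 3) :
    ((l1 - l2 + 1 : ℕ) : ℚ) / ((m - h2 + 1 : ℕ) : ℚ) *
      ((l1 + h1 - 2).choose (m - h2) : ℚ) * ((l2 + h1 - 3).choose (m - h2) : ℚ) *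
      ((m - h2).choose (m - h1) : ℚ) * ((l2 + h2 - 4).choose (h2 - 2) : ℚ) *
      ((l1 + h2 - 3).choose (h2 - 2) : ℚ) / (((h1 - 1).choose (h2 - 2) : ℕ) : ℚ) =
    ((h1 - h2 + 1 : ℕ) : ℚ) / (((l1 + l2 + h1 + h2 - 3 - m) - l2 + 1 : ℕ) : ℚ) *
      ((h1 + l1 - 2).choose ((l1 + l2 + h1 + h2 - 3 - m) - l2) : ℚ) *
      ((h2 + l1 - 3).choose ((l1 + l2 + h1 + h2 - 3 - m) - l2) : ℚ) *
      (((l1 + l2 + h1 + h2 - 3 - m) - l2).choose ((l1 + l2 + h1 + h2 - 3 - m) - l1) : ℚ) *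
      ((h1 + l2 - 3).choose (l2 - 2) : ℚ) * ((h2 + l2 - 4).choose (l2 - 2) : ℚ) /
      (((l1 - 1).choose (l2 - 2) : ℕ) : ℚ) := by
  have hm' : l1 ≤ l1 + l2 + h1 + h2 - 3 - m ∧ l1 + l2 + h1 + h2 - 3 - m ≤ l1 + l2 + h2 - 3 := by
    omega
  calc _ = productFormula l1 l2 h1 h2 m := rfl
    _ = symmetricProduct (l2 - 2) (l1 - l2) (h2 - 2) (h1 - h2) (m - h1) (h1 + h2 + l2 - 3 - m) :=
      productFormula_eq_symmetricProduct hl2 hl hh2 hh hm1 hm2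
    _ = symmetricProduct (h2 - 2) (h1 - h2) (l2 - 2) (l1 - l2) (h1 + h2 + l2 - 3 - m) (m - h1) :=
      symmetricProduct_swap ..
    _ = productFormula h1 h2 l1 l2 (l1 + l2 + h1 + h2 - 3 - m) := by
      rw [productFormula_eq_symmetricProduct hh2 hh hl2 hl hm'.1 hm'.2]
      congr 1 <;> omega
    _ = _ := by
      unfold productFormula
      ring
end

section
/- The partition of standard Young tableaux of shape λ induced by destandardization refines by number of runs: a standard Young tableau T corresponds to an element of QYT_{=m}(λ) if and only if T has exactly m runs, i.e., |Des(T)| = m−1. -/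
open YoungDiagram

/-!
Call a value `w` of a semistandard tableau a descent when some cell of `w` lies weakly left of
some cell of the next smaller value `u` that occurs. A destandardization step at `v` replaces `v`
by `v - 1`: either `v - 1` is unused and this is a mere relabelling, or all `v`'s lie strictly
right of all `(v - 1)`'s and the two values merge. In both cases the descents are carried along
injectively, since `v` is not a descent in the merging case, so their number is invariant. For a
standard tableau the descents are exactly `Des T`. A terminal tableau has, for each occurring
`v > 0`, a cell of `v` weakly left of one of `v - 1` (otherwise one more step applies); so it is
quasi-Yamanouchi, its values are `0, …, m - 1`, and all `m - 1` positive values are descents.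
-/

namespace SemistandardYoungTableau

variable {μ : YoungDiagram}

def Occurs (S : SemistandardYoungTableau μ) (v : ℕ) : Prop :=
  ∃ i j : ℕ, (i, j) ∈ μ ∧ S i j = v

def WeakLeftOf (S : SemistandardYoungTableau μ) (b a : ℕ) : Prop :=
  ∃ i j i' j' : ℕ, (i, j) ∈ μ ∧ (i', j') ∈ μ ∧ S i j = b ∧ S i' j' = a ∧ j ≤ j'

def StrictlyRightOf (S : SemistandardYoungTableau μ) (b a : ℕ) : Prop :=
  ∀ i j i' j' : ℕ, (i, j) ∈ μ → (i', j') ∈ μ → S i j = b → S i' j' = a → j' < j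

def IsSucc (S : SemistandardYoungTableau μ) (u w : ℕ) : Prop :=
  u < w ∧ S.Occurs u ∧ S.Occurs w ∧ ∀ z, u < z → z < w → ¬ S.Occurs z

def descents (S : SemistandardYoungTableau μ) : Set ℕ :=
  {w | ∃ u, S.IsSucc u w ∧ S.WeakLeftOf w u}

variable {S S' : SemistandardYoungTableau μ} {a b u w z : ℕ}

lemma WeakLeftOf.occurs_left (h : S.WeakLeftOf b a) : S.Occurs b :=
  let ⟨i, j, _, _, hc, _, hb, _⟩ := h
  ⟨i, j, hc, hb⟩

lemma WeakLeftOf.occurs_right (h : S.WeakLeftOf b a) : S.Occurs a :=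
  let ⟨_, _, i', j', _, hc', _, ha, _⟩ := h
  ⟨i', j', hc', ha⟩

lemma strictlyRightOf_iff_not_weakLeftOf : S.StrictlyRightOf b a ↔ ¬ S.WeakLeftOf b a := by
  simp only [StrictlyRightOf, WeakLeftOf, not_exists, not_and, not_le]

lemma StrictlyRightOf.weakLeftOf_left (hba : S.StrictlyRightOf b a) (ha : S.Occurs a)
    (h : S.WeakLeftOf b u) : S.WeakLeftOf a u := by
  obtain ⟨i, j, i', j', hc, hc', hb, hu, hjj⟩ := h
  obtain ⟨k, l, hd, ha⟩ := ha
  exact ⟨k, l, i', j', hd, hc', ha, hu, ((hba i j k l hc hd hb ha).trans_le hjj).le⟩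

lemma StrictlyRightOf.weakLeftOf_right (hba : S.StrictlyRightOf b a) (hb : S.Occurs b)
    (h : S.WeakLeftOf w a) : S.WeakLeftOf w b := by
  obtain ⟨i, j, i', j', hc, hc', hw, ha, hjj⟩ := h
  obtain ⟨k, l, hd, hb⟩ := hb
  exact ⟨i, j, k, l, hc, hd, hw, hb, hjj.trans (hba k l i' j' hd hc' hb ha).le⟩

lemma IsSucc.le_of_gt (h : S.IsSucc u w) (hz : S.Occurs z) (huz : u < z) : w ≤ z :=
  not_lt.mp fun hzw => h.2.2.2 z huz hzw hz

lemma IsSucc.le_of_lt (h : S.IsSucc u w) (hz : S.Occurs z) (hzw : z < w) : z ≤ u :=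
  not_lt.mp fun huz => h.2.2.2 z huz hzw hz

lemma occurs_of_mem_descents (h : w ∈ S.descents) : S.Occurs w :=
  let ⟨_, hs, _⟩ := h
  hs.2.2.1

section Comp

variable {f : ℕ → ℕ}

lemma occurs_iff_of_comp (hS' : ∀ i j, (i, j) ∈ μ → S' i j = f (S i j)) :
    S'.Occurs b ↔ ∃ a, S.Occurs a ∧ f a = b := by
  constructor
  · rintro ⟨i, j, hc, rfl⟩
    exact ⟨S i j, ⟨i, j, hc, rfl⟩, (hS' i j hc).symm⟩
  · rintro ⟨a, ⟨i, j, hc, rfl⟩, rfl⟩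
    exact ⟨i, j, hc, hS' i j hc⟩

lemma weakLeftOf_iff_of_comp (hS' : ∀ i j, (i, j) ∈ μ → S' i j = f (S i j)) :
    S'.WeakLeftOf b a ↔ ∃ b' a', f b' = b ∧ f a' = a ∧ S.WeakLeftOf b' a' := by
  constructor
  · rintro ⟨i, j, i', j', hc, hc', rfl, rfl, hjj⟩
    exact ⟨S i j, S i' j', (hS' i j hc).symm, (hS' i' j' hc').symm,
      i, j, i', j', hc, hc', rfl, rfl, hjj⟩
  · rintro ⟨b', a', rfl, rfl, i, j, i', j', hc, hc', rfl, rfl, hjj⟩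
    exact ⟨i, j, i', j', hc, hc', hS' i j hc, hS' i' j' hc', hjj⟩

lemma IsSucc.comp (hS' : ∀ i j, (i, j) ∈ μ → S' i j = f (S i j)) (hf : Monotone f)
    (h : S.IsSucc u w) (hlt : f u < f w) : S'.IsSucc (f u) (f w) := by
  refine ⟨hlt, (occurs_iff_of_comp hS').2 ⟨u, h.2.1, rfl⟩,
    (occurs_iff_of_comp hS').2 ⟨w, h.2.2.1, rfl⟩, fun z' hz1 hz2 hz' => ?_⟩
  obtain ⟨z, hz, rfl⟩ := (occurs_iff_of_comp hS').1 hz'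
  have huz : u < z := lt_of_not_ge fun hzu => (hf hzu).not_gt hz1
  exact (hf (h.le_of_gt hz huz)).not_gt hz2

end Comp

end SemistandardYoungTableau

def mergeDown (v x : ℕ) : ℕ :=
  if x = v then v - 1 else x

lemma mergeDown_monotone (v : ℕ) : Monotone (mergeDown v) := by
  intro x y hxy
  unfold mergeDown
  split_ifs <;> omega

lemma mergeDown_eq_mergeDown_iff {v x y : ℕ} :
    mergeDown v x = mergeDown v y ↔ x = y ∨ x = v ∧ y = v - 1 ∨ x = v - 1 ∧ y = v := by
  unfold mergeDown
  split_ifs <;> omega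

namespace StepAt

open SemistandardYoungTableau

variable {μ : YoungDiagram} {S S' : SemistandardYoungTableau μ} {v a b u w : ℕ}

lemma entry_eq (h : StepAt μ S S' v) : ∀ i j, (i, j) ∈ μ → S' i j = mergeDown v (S i j) :=
  h.2.2.2

lemma strictlyRightOf (h : StepAt μ S S' v) : S.StrictlyRightOf v (v - 1) :=
  h.2.2.1

lemma occurs_iff (h : StepAt μ S S' v) :
    S'.Occurs b ↔ (b ≠ v ∧ S.Occurs b) ∨ b = v - 1 := by
  rw [occurs_iff_of_comp h.entry_eq]
  constructor
  · rintro ⟨a, ha, rfl⟩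
    unfold mergeDown
    split_ifs with hav
    · exact Or.inr rfl
    · exact Or.inl ⟨hav, ha⟩
  · rintro (⟨hbv, hb⟩ | rfl)
    · exact ⟨b, hb, if_neg hbv⟩
    · exact ⟨v, h.2.1, if_pos rfl⟩

lemma not_occurs (h : StepAt μ S S' v) : ¬ S'.Occurs v := by
  have := h.1
  rw [h.occurs_iff]
  omega

lemma exists_isSucc (h : StepAt μ S S' v) (hs : S'.IsSucc a b) :
    ∃ u w, S.IsSucc u w ∧ mergeDown v u = a ∧ mergeDown v w = b := by
  obtain ⟨hab, ha, hb, hgap⟩ := hs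
  have hv := h.1
  have hvS := h.2.1
  have hav : a ≠ v := fun e => h.not_occurs (e ▸ ha)
  have hbv : b ≠ v := fun e => h.not_occurs (e ▸ hb)
  have hgap' : ∀ z, a < mergeDown v z → mergeDown v z < b → ¬ S.Occurs z := fun z h1 h2 hz =>
    hgap _ h1 h2 ((occurs_iff_of_comp h.entry_eq).2 ⟨z, hz, rfl⟩)
  have hocc : ∀ {x}, x ≠ v - 1 → S'.Occurs x → S.Occurs x := fun hx hx' =>
    ((h.occurs_iff.1 hx').resolve_right hx).2
  -- Lift `a` to the largest and `b` to the smallest value of its fibre under `mergeDown v`.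
  by_cases ha1 : a = v - 1
  · subst ha1
    refine ⟨v, b, ⟨by omega, hvS, hocc (by omega) hb, fun z h1 h2 hz => hgap' z ?_ ?_ hz⟩,
      if_pos rfl, if_neg hbv⟩ <;> unfold mergeDown <;> split_ifs <;> omega
  by_cases hb1 : b = v - 1
  · subst hb1
    by_cases hp : S.Occurs (v - 1)
    · refine ⟨a, v - 1, ⟨hab, hocc ha1 ha, hp, fun z h1 h2 hz => hgap' z ?_ ?_ hz⟩,
        if_neg hav, if_neg (by omega)⟩ <;> unfold mergeDown <;> split_ifs <;> omega
    · refine ⟨a, v, ⟨by omega, hocc ha1 ha, hvS, fun z h1 h2 hz => hgap' z ?_ ?_ hz⟩,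
        if_neg hav, if_pos rfl⟩ <;> unfold mergeDown <;> split_ifs <;> try omega
      exact lt_of_le_of_ne (by omega) fun e => hp (e ▸ hz)
  · refine ⟨a, b, ⟨hab, hocc ha1 ha, hocc hb1 hb, fun z h1 h2 hz => hgap' z ?_ ?_ hz⟩,
      if_neg hav, if_neg hbv⟩ <;> unfold mergeDown <;> split_ifs <;> omega

lemma weakLeftOf_iff (h : StepAt μ S S' v) (hs : S.IsSucc u w)
    (hlt : mergeDown v u < mergeDown v w) :
    S'.WeakLeftOf (mergeDown v w) (mergeDown v u) ↔ S.WeakLeftOf w u := by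
  refine ⟨fun h' => ?_, fun hwu =>
    (weakLeftOf_iff_of_comp h.entry_eq).2 ⟨w, u, rfl, rfl, hwu⟩⟩
  obtain ⟨w', u', hw', hu', hwl⟩ := (weakLeftOf_iff_of_comp h.entry_eq).1 h'
  have hv := h.1
  -- The fibres of `mergeDown v` are singletons except for `{v - 1, v}`, and `u`, `w` are
  -- never the wrong end of that fibre: the other end would lie strictly between them.
  have hw : S.WeakLeftOf w u' := by
    rcases mergeDown_eq_mergeDown_iff.1 hw' with rfl | ⟨rfl, rfl⟩ | ⟨rfl, rfl⟩
    · exact hwl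
    · exact h.strictlyRightOf.weakLeftOf_left hs.2.2.1 hwl
    · have := hs.le_of_lt hwl.occurs_left (by omega)
      unfold mergeDown at hlt
      split_ifs at hlt <;> omega
  rcases mergeDown_eq_mergeDown_iff.1 hu' with rfl | ⟨rfl, rfl⟩ | ⟨rfl, rfl⟩
  · exact hw
  · have := hs.le_of_gt hw.occurs_right (by omega)
    unfold mergeDown at hlt
    split_ifs at hlt <;> omega
  · exact h.strictlyRightOf.weakLeftOf_right hs.2.1 hw

lemma not_mem_descents (h : StepAt μ S S' v) (hp : S.Occurs (v - 1)) : v ∉ S.descents := by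
  rintro ⟨u, hs, hwl⟩
  have hv := h.1
  have hu : u = v - 1 := le_antisymm (by have := hs.1; omega) (hs.le_of_lt hp (by omega))
  exact (strictlyRightOf_iff_not_weakLeftOf.1 h.strictlyRightOf) (hu ▸ hwl)

lemma descents_eq_image (h : StepAt μ S S' v) : S'.descents = mergeDown v '' S.descents := by
  ext b
  constructor
  · rintro ⟨a, hs', hwl'⟩
    obtain ⟨u, w, hs, rfl, rfl⟩ := h.exists_isSucc hs'
    exact ⟨w, ⟨u, hs, (h.weakLeftOf_iff hs hs'.1).1 hwl'⟩, rfl⟩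
  · rintro ⟨w, ⟨u, hs, hwl⟩, rfl⟩
    have hlt : mergeDown v u < mergeDown v w := by
      refine lt_of_le_of_ne (mergeDown_monotone v hs.1.le) fun e => ?_
      have huw := hs.1
      rcases mergeDown_eq_mergeDown_iff.1 e with rfl | ⟨rfl, rfl⟩ | ⟨rfl, rfl⟩
      · omega
      · omega
      · exact h.not_mem_descents hs.2.1 ⟨_, hs, hwl⟩
    exact ⟨_, hs.comp h.entry_eq (mergeDown_monotone v) hlt, (h.weakLeftOf_iff hs hlt).2 hwl⟩

lemma injOn_descents (h : StepAt μ S S' v) : Set.InjOn (mergeDown v) S.descents := by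
  intro x hx y hy e
  rcases mergeDown_eq_mergeDown_iff.1 e with e | ⟨rfl, rfl⟩ | ⟨rfl, rfl⟩
  · exact e
  · exact absurd hx (h.not_mem_descents (occurs_of_mem_descents hy))
  · exact absurd hy (h.not_mem_descents (occurs_of_mem_descents hx))

lemma ncard_descents (h : StepAt μ S S' v) : S'.descents.ncard = S.descents.ncard := by
  rw [h.descents_eq_image, h.injOn_descents.ncard_image]

end StepAt

namespace SemistandardYoungTableau

variable {μ : YoungDiagram} {S T Q : SemistandardYoungTableau μ} {v w m : ℕ}

lemma ncard_descents_of_reflTransGen (h : Relation.ReflTransGen (Step μ) T Q) :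
    Q.descents.ncard = T.descents.ncard := by
  induction h with
  | refl => rfl
  | tail _ hstep ih =>
    obtain ⟨v, hv⟩ := hstep
    rw [hv.ncard_descents, ih]

lemma exists_stepAt (hv : 0 < v) (hocc : S.Occurs v) (hright : S.StrictlyRightOf v (v - 1)) :
    ∃ S', StepAt μ S S' v := by
  have hf := mergeDown_monotone v
  refine ⟨⟨fun i j => mergeDown v (S i j), ?_, ?_, ?_⟩, hv, hocc, hright, fun _ _ _ => rfl⟩
  · intro i j₁ j₂ hj hc
    exact hf (S.row_weak hj hc)
  · intro i₁ i₂ j hi hc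
    have hc₁ : (i₁, j) ∈ μ := μ.up_left_mem hi.le le_rfl hc
    have hlt := S.col_strict hi hc
    have : ¬ (S i₂ j = v ∧ S i₁ j = v - 1) := fun ⟨h₂, h₁⟩ =>
      (hright i₂ j i₁ j hc hc₁ h₂ h₁).false
    unfold mergeDown
    split_ifs <;> omega
  · intro i j hc
    simp only [S.zeros hc, mergeDown, hv.ne, if_false]

lemma weakLeftOf_pred_of_terminal (hterm : ∀ Q', ¬ Step μ Q Q') (hv : 0 < v)
    (hocc : Q.Occurs v) : Q.WeakLeftOf v (v - 1) := by
  by_contra hwl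
  obtain ⟨Q', hQ'⟩ := exists_stepAt hv hocc (strictlyRightOf_iff_not_weakLeftOf.2 hwl)
  exact hterm Q' ⟨v, hQ'⟩

lemma isQY_of_terminal (hterm : ∀ Q', ¬ Step μ Q Q') : IsQY μ Q :=
  fun _ hv hocc => weakLeftOf_pred_of_terminal hterm hv hocc

lemma occurs_of_le_of_terminal (hterm : ∀ Q', ¬ Step μ Q Q') (hocc : Q.Occurs v)
    (hwv : w ≤ v) : Q.Occurs w := by
  induction v, hwv using Nat.le_induction with
  | base => exact hocc
  | succ v _ ih => exact ih (weakLeftOf_pred_of_terminal hterm v.succ_pos hocc).occurs_right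

lemma descents_eq_Ioo_of_terminal (hterm : ∀ Q', ¬ Step μ Q Q') (hQ : MaxEq μ Q m) :
    Q.descents = Set.Ioo 0 m := by
  obtain ⟨hlt, i, j, hc, hmax⟩ := hQ
  have hocc : ∀ {w}, w < m → Q.Occurs w := fun hw =>
    occurs_of_le_of_terminal hterm ⟨i, j, hc, hmax⟩ (by omega)
  ext w
  constructor
  · rintro ⟨u, hs, -⟩
    obtain ⟨k, l, hd, rfl⟩ := hs.2.2.1
    exact ⟨hs.1.trans_le' (Nat.zero_le u), hlt k l hd⟩
  · rintro ⟨hw, hwm⟩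
    exact ⟨w - 1, ⟨by omega, hocc (by omega), hocc hwm, fun z _ _ => by omega⟩,
      weakLeftOf_pred_of_terminal hterm hw (hocc hwm)⟩

lemma exists_maxEq (hμ : 0 < μ.card) (Q : SemistandardYoungTableau μ) :
    ∃ M, MaxEq μ Q (M + 1) := by
  set values : Finset ℕ := μ.cells.image fun c => Q c.1 c.2
  have hne : values.Nonempty := (Finset.card_pos.1 hμ).image _
  obtain ⟨⟨i, j⟩, hc, hM⟩ := Finset.mem_image.1 (values.max'_mem hne)
  refine ⟨_, fun k l hd => Nat.lt_succ_of_le ?_, i, j, (mem_cells _).1 hc, hM⟩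
  exact values.le_max' _ (Finset.mem_image.2 ⟨(k, l), (mem_cells _).2 hd, rfl⟩)

lemma maxEq_iff_ncard_descents_of_terminal (hμ : 0 < μ.card) (hterm : ∀ Q', ¬ Step μ Q Q')
    (hm : 1 ≤ m) : MaxEq μ Q m ↔ Q.descents.ncard = m - 1 := by
  have ncard_eq : ∀ {m}, MaxEq μ Q m → Q.descents.ncard = m - 1 := fun hQ => by
    rw [descents_eq_Ioo_of_terminal hterm hQ, ← Finset.coe_Ioo, Set.ncard_coe_finset,
      Nat.card_Ioo, Nat.sub_zero]
  refine ⟨ncard_eq, fun hcard => ?_⟩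
  obtain ⟨M, hM⟩ := exists_maxEq hμ Q
  rwa [show m = M + 1 by have := ncard_eq hM; omega]

end SemistandardYoungTableau

namespace IsSYT

open SemistandardYoungTableau

variable {μ : YoungDiagram} {T : SemistandardYoungTableau μ}

lemma entry_lt_card_s14 (hT : IsSYT μ T) {i j : ℕ} (hc : (i, j) ∈ μ) : T i j < μ.card := by
  classical
  -- The cells with entry `< μ.card` are in bijection with `range μ.card`, so they are all cells.
  have hcard : (μ.cells.filter fun c => T c.1 c.2 < μ.card).card = μ.cells.card := by
    refine Finset.card_nbij (fun c => T c.1 c.2) (fun c hc => ?_) (fun c hc d hd e => ?_)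
      (fun v hv => ?_) |>.trans (Finset.card_range _)
    · exact Finset.mem_range.2 (Finset.mem_filter.1 hc).2
    · obtain ⟨hc, hlt⟩ := Finset.mem_filter.1 hc
      obtain ⟨hd, -⟩ := Finset.mem_filter.1 hd
      exact (hT _ hlt).unique ⟨(mem_cells _).1 hc, rfl⟩ ⟨(mem_cells _).1 hd, e.symm⟩
    · obtain ⟨p, ⟨hp, rfl⟩, -⟩ := hT v (Finset.mem_range.1 hv)
      exact ⟨p, Finset.mem_filter.2 ⟨(mem_cells _).2 hp, Finset.mem_range.1 hv⟩, rfl⟩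
  exact Finset.card_filter_eq_iff.1 hcard (i, j) ((mem_cells _).2 hc)

lemma occurs_iff (hT : IsSYT μ T) {v : ℕ} : T.Occurs v ↔ v < μ.card := by
  constructor
  · rintro ⟨i, j, hc, rfl⟩
    exact hT.entry_lt_card_s14 hc
  · intro hv
    obtain ⟨p, ⟨hp, he⟩, -⟩ := hT v hv
    exact ⟨p.1, p.2, hp, he⟩

lemma descents_eq_Des (hT : IsSYT μ T) : T.descents = Des μ T := by
  ext d
  constructor
  · rintro ⟨u, ⟨hud, -, hd, hgap⟩, hwl⟩
    have hdlt := hT.occurs_iff.1 hd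
    obtain rfl : u = d - 1 := by
      by_contra hne
      exact hgap (d - 1) (by omega) (by omega) (hT.occurs_iff.2 (by omega))
    exact ⟨by omega, by omega, hwl⟩
  · rintro ⟨hd1, hdn, hwl⟩
    exact ⟨d - 1, ⟨by omega, hT.occurs_iff.2 (by omega), hT.occurs_iff.2 (by omega),
      fun z _ _ => by omega⟩, hwl⟩

end IsSYT

/-- a standard Young tableau `T` corresponds (via destandardization)
to an element of `QYT_{=m}(λ)` if and only if `T` has exactly `m` runs, i.e.
`|Des(T)| = m - 1`. -/
theorem dst_maxeq_iff_descents (μ : YoungDiagram) (hμ : 0 < μ.card)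
    (T Q : SemistandardYoungTableau μ) (hT : IsSYT μ T) (hdst : IsDst μ T Q)
    (m : ℕ) (hm : 1 ≤ m) :
    (IsQY μ Q ∧ MaxEq μ Q m) ↔ (Des μ T).ncard = m - 1 := by
  obtain ⟨hreach, hterm⟩ := hdst
  rw [← hT.descents_eq_Des, ← SemistandardYoungTableau.ncard_descents_of_reflTransGen hreach,
    ← SemistandardYoungTableau.maxEq_iff_ncard_descents_of_terminal hμ hterm hm]
  exact and_iff_right (SemistandardYoungTableau.isQY_of_terminal hterm)
end
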